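/- arXiv:math/0508631 — 8 statements merged into one kernel-verified Lean document; each statement's English description precedes it below -/
import Mathlib

section
/- If {a1,a2,a3,a4} is a balanced set, then gcd(a1,a4) and gcd(a2,a3) are relatively prime. -/
theorem stmt_1 (a1 a2 a3 a4 : ℕ)
(h1 : 0 < a1) (h12 : a1 < a2) (h23 : a2 < a3) (h34 : a3 < a4)
    (hgcd : Nat.gcd (Nat.gcd a1 a2) (Nat.gcd a3 a4) = 1)
    (hd12 : ¬ a1 ∣ a2) (hd13 : ¬ a1 ∣ a3) (hd14 : ¬ a1 ∣ a4)
    (hd23 : ¬ a2 ∣ a3) (hd24 : ¬ a2 ∣ a4) (hd34 : ¬ a3 ∣ a4)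
    (hsum : a1 + a4 = a2 + a3) :
    Nat.Coprime (Nat.gcd a1 a4) (Nat.gcd a2 a3) := by
  have ha1 : Nat.gcd (Nat.gcd a1 a4) (Nat.gcd a2 a3) ∣ a1 :=
    (Nat.gcd_dvd_left _ _).trans (Nat.gcd_dvd_left _ _)
  have ha4 : Nat.gcd (Nat.gcd a1 a4) (Nat.gcd a2 a3) ∣ a4 :=
    (Nat.gcd_dvd_left _ _).trans (Nat.gcd_dvd_right _ _)
  have ha2 : Nat.gcd (Nat.gcd a1 a4) (Nat.gcd a2 a3) ∣ a2 :=
    (Nat.gcd_dvd_right _ _).trans (Nat.gcd_dvd_left _ _)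
  have ha3 : Nat.gcd (Nat.gcd a1 a4) (Nat.gcd a2 a3) ∣ a3 :=
    (Nat.gcd_dvd_right _ _).trans (Nat.gcd_dvd_right _ _)
  have h : Nat.gcd (Nat.gcd a1 a4) (Nat.gcd a2 a3) ∣
      Nat.gcd (Nat.gcd a1 a2) (Nat.gcd a3 a4) :=
    Nat.dvd_gcd (Nat.dvd_gcd ha1 ha2) (Nat.dvd_gcd ha3 ha4)
  rw [hgcd] at h
  exact Nat.dvd_one.mp h
end

section
/- Let {a1,a2,a3,a4} be a balanced set with D=gcd(a1,a4), E=gcd(a2,a3), a1=q1·D, a2=q2·E, a3=q3·E, a4=q4·D. Then gcd(q1,q4)=gcd(q2,q3)=gcd(D,E)=gcd(q1,E)=gcd(q2,D)=gcd(q3,D)=gcd(q4,E)=1. -/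
theorem stmt_2 (a1 a2 a3 a4 D E q1 q2 q3 q4 : ℕ)
(h1 : 0 < a1) (h12 : a1 < a2) (h23 : a2 < a3) (h34 : a3 < a4)
    (hgcd : Nat.gcd (Nat.gcd a1 a2) (Nat.gcd a3 a4) = 1)
    (hd12 : ¬ a1 ∣ a2) (hd13 : ¬ a1 ∣ a3) (hd14 : ¬ a1 ∣ a4)
    (hd23 : ¬ a2 ∣ a3) (hd24 : ¬ a2 ∣ a4) (hd34 : ¬ a3 ∣ a4)
    (hsum : a1 + a4 = a2 + a3)
(hD : D = Nat.gcd a1 a4) (hE : E = Nat.gcd a2 a3)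
    (hq1 : a1 = q1 * D) (hq2 : a2 = q2 * E) (hq3 : a3 = q3 * E) (hq4 : a4 = q4 * D) :
    Nat.gcd q1 q4 = 1 ∧ Nat.gcd q2 q3 = 1 ∧ Nat.gcd D E = 1 ∧
    Nat.gcd q1 E = 1 ∧ Nat.gcd q2 D = 1 ∧ Nat.gcd q3 D = 1 ∧ Nat.gcd q4 E = 1 := by
  have hD0 : 0 < D := by
    rw [hD]; exact Nat.gcd_pos_of_pos_left _ h1
  have hE0 : 0 < E := by
    rw [hE]; exact Nat.gcd_pos_of_pos_left _ (by omega)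
  -- any common divisor of all four is 1
  have key : ∀ g : ℕ, g ∣ a1 → g ∣ a2 → g ∣ a3 → g ∣ a4 → g = 1 := by
    intro g g1 g2 g3 g4
    have : g ∣ Nat.gcd (Nat.gcd a1 a2) (Nat.gcd a3 a4) :=
      Nat.dvd_gcd (Nat.dvd_gcd g1 g2) (Nat.dvd_gcd g3 g4)
    rw [hgcd] at this
    exact Nat.eq_one_of_dvd_one this
  have hDdvd1 : D ∣ a1 := hD ▸ Nat.gcd_dvd_left _ _
  have hDdvd4 : D ∣ a4 := hD ▸ Nat.gcd_dvd_right _ _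
  have hEdvd2 : E ∣ a2 := hE ▸ Nat.gcd_dvd_left _ _
  have hEdvd3 : E ∣ a3 := hE ▸ Nat.gcd_dvd_right _ _
  refine ⟨?_, ?_, ?_, ?_, ?_, ?_, ?_⟩
  · have : Nat.gcd q1 q4 * D = D := by
      conv_rhs => rw [hD, hq1, hq4, Nat.gcd_mul_right]
    exact Nat.eq_of_mul_eq_mul_right hD0 (this.trans (one_mul D).symm)
  · have : Nat.gcd q2 q3 * E = E := by
      conv_rhs => rw [hE, hq2, hq3, Nat.gcd_mul_right]
    exact Nat.eq_of_mul_eq_mul_right hE0 (this.trans (one_mul E).symm)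
  · exact key _ ((Nat.gcd_dvd_left D E).trans hDdvd1)
      ((Nat.gcd_dvd_right D E).trans hEdvd2)
      ((Nat.gcd_dvd_right D E).trans hEdvd3)
      ((Nat.gcd_dvd_left D E).trans hDdvd4)
  · -- gcd q1 E
    have g1 : Nat.gcd q1 E ∣ a1 := hq1 ▸ (Nat.gcd_dvd_left q1 E).mul_right D
    have g2 : Nat.gcd q1 E ∣ a2 := (Nat.gcd_dvd_right q1 E).trans hEdvd2
    have g3 : Nat.gcd q1 E ∣ a3 := (Nat.gcd_dvd_right q1 E).trans hEdvd3
    have g4 : Nat.gcd q1 E ∣ a4 := by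
      have : Nat.gcd q1 E ∣ a2 + a3 := Nat.dvd_add g2 g3
      rw [← hsum] at this
      have h2 := Nat.dvd_sub this g1
      simpa [Nat.add_sub_cancel_left] using h2
    exact key _ g1 g2 g3 g4
  · have g2 : Nat.gcd q2 D ∣ a2 := hq2 ▸ (Nat.gcd_dvd_left q2 D).mul_right E
    have g1 : Nat.gcd q2 D ∣ a1 := (Nat.gcd_dvd_right q2 D).trans hDdvd1
    have g4 : Nat.gcd q2 D ∣ a4 := (Nat.gcd_dvd_right q2 D).trans hDdvd4
    have g3 : Nat.gcd q2 D ∣ a3 := by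
      have h : Nat.gcd q2 D ∣ a1 + a4 := Nat.dvd_add g1 g4
      rw [hsum] at h
      have h2 := Nat.dvd_sub h g2
      simpa [Nat.add_sub_cancel_left] using h2
    exact key _ g1 g2 g3 g4
  · have g3 : Nat.gcd q3 D ∣ a3 := hq3 ▸ (Nat.gcd_dvd_left q3 D).mul_right E
    have g1 : Nat.gcd q3 D ∣ a1 := (Nat.gcd_dvd_right q3 D).trans hDdvd1
    have g4 : Nat.gcd q3 D ∣ a4 := (Nat.gcd_dvd_right q3 D).trans hDdvd4
    have g2 : Nat.gcd q3 D ∣ a2 := by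
      have h : Nat.gcd q3 D ∣ a1 + a4 := Nat.dvd_add g1 g4
      rw [hsum] at h
      have := Nat.dvd_sub h g3
      simpa [Nat.add_sub_cancel] using this
    exact key _ g1 g2 g3 g4
  · have g4 : Nat.gcd q4 E ∣ a4 := hq4 ▸ (Nat.gcd_dvd_left q4 E).mul_right D
    have g2 : Nat.gcd q4 E ∣ a2 := (Nat.gcd_dvd_right q4 E).trans hEdvd2
    have g3 : Nat.gcd q4 E ∣ a3 := (Nat.gcd_dvd_right q4 E).trans hEdvd3
    have g1 : Nat.gcd q4 E ∣ a1 := by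
      have h : Nat.gcd q4 E ∣ a2 + a3 := Nat.dvd_add g2 g3
      rw [← hsum] at h
      have := Nat.dvd_sub h g4
      simpa [Nat.add_sub_cancel_left] using this
    exact key _ g1 g2 g3 g4
end

section
/- Let S be a numerical semigroup minimally generated by a balanced set {a1,a2,a3,a4}, with a1=q1·D, a2=q2·E, a3=q3·E, a4=q4·D where D=gcd(a1,a4), E=gcd(a2,a3). If s belongs to the Apery set Ap(S) = {s ∈ S : s - a1 ∉ S}, then s = t4·a4 with 0 ≤ t4 ≤ q1-1, or s = t2·a2 + t4·a4 with 1 ≤ t2 ≤ q3 and 0 ≤ t4 ≤ q1-1, or s = t3·a3 + t4·a4 with 1 ≤ t3 ≤ q2-1 and 0 ≤ t4 ≤ q1-1. -/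
/-- The numerical semigroup generated by a1, a2, a3, a4, as a set of integers. -/
def SG (a1 a2 a3 a4 : ℕ) : Set ℤ :=
  {s | ∃ t1 t2 t3 t4 : ℕ, s = t1 * a1 + t2 * a2 + t3 * a3 + t4 * a4}

theorem stmt_5 (a1 a2 a3 a4 D E q1 q2 q3 q4 : ℕ)
(h1 : 0 < a1) (h12 : a1 < a2) (h23 : a2 < a3) (h34 : a3 < a4)
    (hgcd : Nat.gcd (Nat.gcd a1 a2) (Nat.gcd a3 a4) = 1)
    (hd12 : ¬ a1 ∣ a2) (hd13 : ¬ a1 ∣ a3) (hd14 : ¬ a1 ∣ a4)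
    (hd23 : ¬ a2 ∣ a3) (hd24 : ¬ a2 ∣ a4) (hd34 : ¬ a3 ∣ a4)
    (hsum : a1 + a4 = a2 + a3)
(hD : D = Nat.gcd a1 a4) (hE : E = Nat.gcd a2 a3)
    (hq1 : a1 = q1 * D) (hq2 : a2 = q2 * E) (hq3 : a3 = q3 * E) (hq4 : a4 = q4 * D)
    (s : ℤ) (hs : s ∈ SG a1 a2 a3 a4) (hap : s - a1 ∉ SG a1 a2 a3 a4) :
    (∃ t4 : ℕ, t4 ≤ q1 - 1 ∧ s = t4 * a4) ∨
    (∃ t2 t4 : ℕ, 1 ≤ t2 ∧ t2 ≤ q3 ∧ t4 ≤ q1 - 1 ∧ s = t2 * a2 + t4 * a4) ∨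
    (∃ t3 t4 : ℕ, 1 ≤ t3 ∧ t3 ≤ q2 - 1 ∧ t4 ≤ q1 - 1 ∧ s = t3 * a3 + t4 * a4) := by
  obtain ⟨t1, t2, t3, t4, hrep⟩ := hs
  have ha2 : 0 < a2 := lt_trans h1 h12
  have ha3 : 0 < a3 := lt_trans ha2 h23
  have ha4 : 0 < a4 := lt_trans ha3 h34
  have hq1' : 1 ≤ q1 := by
    rcases Nat.eq_zero_or_pos q1 with h | h
    · subst h; omega
    · exact h
  have hq2' : 1 ≤ q2 := by
    rcases Nat.eq_zero_or_pos q2 with h | h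
    · subst h; omega
    · exact h
  have hq3' : 1 ≤ q3 := by
    rcases Nat.eq_zero_or_pos q3 with h | h
    · subst h; omega
    · exact h
  have hq4' : 1 ≤ q4 := by
    rcases Nat.eq_zero_or_pos q4 with h | h
    · subst h; omega
    · exact h
  have hA : (q1 : ℤ) * a4 = q4 * a1 := by
    have : q1 * a4 = q4 * a1 := by rw [hq1, hq4]; ring
    exact_mod_cast this
  have hB : (q3 : ℤ) * a2 = q2 * a3 := by
    have : q3 * a2 = q2 * a3 := by rw [hq2, hq3]; ring
    exact_mod_cast this
  have hC : (a1 : ℤ) + a4 = a2 + a3 := by exact_mod_cast hsum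
  -- t1 = 0
  have ht1 : t1 = 0 := by
    by_contra h
    obtain ⟨k, rfl⟩ := Nat.exists_eq_succ_of_ne_zero h
    exact hap ⟨k, t2, t3, t4, by push_cast at hrep ⊢; linarith⟩
  subst ht1
  -- t4 < q1
  have ht4 : t4 ≤ q1 - 1 := by
    by_contra h
    have h' : q1 ≤ t4 := by omega
    obtain ⟨k, rfl⟩ := Nat.exists_eq_add_of_le h'
    obtain ⟨m, hm⟩ := Nat.exists_eq_add_of_le hq4'
    refine hap ⟨m, t2, t3, k, ?_⟩
    have hm' : (q4 : ℤ) = 1 + m := by exact_mod_cast hm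
    push_cast at hrep ⊢
    linear_combination hrep + hA + a1 * hm'
  -- not both t2 ≥ 1 and t3 ≥ 1
  rcases Nat.eq_zero_or_pos t2 with h2 | h2 <;> rcases Nat.eq_zero_or_pos t3 with h3 | h3
  · -- t2 = 0, t3 = 0
    subst h2; subst h3
    exact Or.inl ⟨t4, ht4, by push_cast at hrep ⊢; linarith⟩
  · -- t2 = 0, t3 ≥ 1
    subst h2
    by_cases hle : t3 ≤ q2 - 1
    · exact Or.inr (Or.inr ⟨t3, t4, h3, hle, ht4, by push_cast at hrep ⊢; linarith⟩)
    · by_cases heq : t3 = q2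
      · subst heq
        refine Or.inr (Or.inl ⟨q3, t4, hq3', le_refl _, ht4, ?_⟩)
        push_cast at hrep ⊢
        linear_combination hrep - hB
      · have h' : q2 + 1 ≤ t3 := by omega
        obtain ⟨k, rfl⟩ := Nat.exists_eq_add_of_le h'
        obtain ⟨m, hm⟩ := Nat.exists_eq_add_of_le hq3'
        exfalso
        refine hap ⟨0, m, k, t4 + 1, ?_⟩
        have hm' : (q3 : ℤ) = 1 + m := by exact_mod_cast hm
        push_cast at hrep ⊢
        linear_combination hrep - hC - hB + a2 * hm'
  · -- t2 ≥ 1, t3 = 0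
    subst h3
    by_cases hle : t2 ≤ q3
    · exact Or.inr (Or.inl ⟨t2, t4, h2, hle, ht4, by push_cast at hrep ⊢; linarith⟩)
    · have h' : q3 + 1 ≤ t2 := by omega
      obtain ⟨k, rfl⟩ := Nat.exists_eq_add_of_le h'
      obtain ⟨m, hm⟩ := Nat.exists_eq_add_of_le hq2'
      exfalso
      refine hap ⟨0, k, m, t4 + 1, ?_⟩
      have hm' : (q2 : ℤ) = 1 + m := by exact_mod_cast hm
      push_cast at hrep ⊢
      linear_combination hrep - hC + hB + a3 * hm'
  · -- t2 ≥ 1, t3 ≥ 1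
    obtain ⟨b, rfl⟩ := Nat.exists_eq_add_of_le h2
    obtain ⟨c, rfl⟩ := Nat.exists_eq_add_of_le h3
    exfalso
    refine hap ⟨0, b, c, t4 + 1, ?_⟩
    push_cast at hrep ⊢
    linear_combination hrep - hC
end

section
/- Let S be a unitary numerical semigroup generated by {a1,a2,a3,a4} with notation a1=q1·D, a2=q2·E, a3=q3·E, a4=q4·D. Define A1={t4·a4 : 0≤t4≤q1−1}, A2={t2·a2+t4·a4 : 1≤t2≤q3, 0≤t4≤q1−1}, A3={t3·a3+t4·a4 : 1≤t3≤q2−1, 0≤t4≤q1−1}. Then Ap(S)=A1∪A2∪A3, the sets A1, A2, A3 are pairwise disjoint, and the elements of A1∪A2∪A3 are pairwise non-congruent modulo a1. -/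
def A1 (a4 q1 : ℕ) : Set ℤ := {x | ∃ t4 : ℕ, t4 ≤ q1 - 1 ∧ x = t4 * a4}

def A2 (a2 a4 q1 q3 : ℕ) : Set ℤ :=
  {x | ∃ t2 t4 : ℕ, 1 ≤ t2 ∧ t2 ≤ q3 ∧ t4 ≤ q1 - 1 ∧ x = t2 * a2 + t4 * a4}

def A3 (a3 a4 q1 q2 : ℕ) : Set ℤ :=
  {x | ∃ t3 t4 : ℕ, 1 ≤ t3 ∧ t3 ≤ q2 - 1 ∧ t4 ≤ q1 - 1 ∧ x = t3 * a3 + t4 * a4}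

theorem reduceL (a1 a2 a3 a4 q1 q2 q3 q4 : ℕ)
    (hsum : a1 + a4 = a2 + a3) (h23 : q2 * a3 = q3 * a2)
    (h14 : q1 * a4 = q4 * a1) (hq1 : 1 ≤ q1) (hq2 : 1 ≤ q2)
    (ha1 : 0 < a1) (ha4 : 0 < a4) :
    ∀ t2 t3 t4 : ℕ, ∃ u2 u3 u4 k : ℕ,
      u2 ≤ q3 ∧ u3 ≤ q2 - 1 ∧ u4 ≤ q1 - 1 ∧ (u2 = 0 ∨ u3 = 0) ∧
      (t2 * a2 + t3 * a3 + t4 * a4 : ℤ) = k * a1 + (u2 * a2 + u3 * a3 + u4 * a4) := by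
  have ha14 : a4 + a1 = a2 + a3 := by omega
  suffices H : ∀ n, ∀ t2 t3 t4, (a2 * t2 + a3 * t3 + a4 * t4) * (q2 + 1) + t3 ≤ n →
      ∃ u2 u3 u4 k : ℕ,
      u2 ≤ q3 ∧ u3 ≤ q2 - 1 ∧ u4 ≤ q1 - 1 ∧ (u2 = 0 ∨ u3 = 0) ∧
      (t2 * a2 + t3 * a3 + t4 * a4 : ℤ) = k * a1 + (u2 * a2 + u3 * a3 + u4 * a4) by
    intro t2 t3 t4; exact H _ t2 t3 t4 le_rfl
  intro n
  induction n using Nat.strong_induction_on with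
  | _ n ih =>
    intro t2 t3 t4 hn
    by_cases h4 : q1 ≤ t4
    · -- rule 3 : q1 * a4 = q4 * a1
      have h5 : a4 * (t4 - q1) + a4 * q1 = a4 * t4 := by
        rw [← Nat.mul_add]; congr 1; omega
      have hval : a2 * t2 + a3 * t3 + a4 * (t4 - q1) + a4 * q1
          = a2 * t2 + a3 * t3 + a4 * t4 := by linarith
      have hval2 : (a2 * t2 + a3 * t3 + a4 * (t4 - q1)) * (q2 + 1) + (a4 * q1) * (q2 + 1)
          = (a2 * t2 + a3 * t3 + a4 * t4) * (q2 + 1) := by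
        rw [← Nat.add_mul, hval]
      have hpos : 0 < (a4 * q1) * (q2 + 1) :=
        Nat.mul_pos (Nat.mul_pos ha4 hq1) (by omega)
      have hm : (a2 * t2 + a3 * t3 + a4 * (t4 - q1)) * (q2 + 1) + t3 < n := by linarith
      obtain ⟨u2, u3, u4, k, c1, c2, c3, c4, heq⟩ := ih _ hm t2 t3 (t4 - q1) le_rfl
      refine ⟨u2, u3, u4, k + q4, c1, c2, c3, c4, ?_⟩
      have h5' : ((t4 : ℤ)) = ((t4 - q1 : ℕ) : ℤ) + q1 := by omega
      have h14' : (q1 : ℤ) * a4 = q4 * a1 := by exact_mod_cast h14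
      rw [h5']; push_cast; linarith [heq]
    · by_cases hone : 1 ≤ t2 ∧ 1 ≤ t3
      · -- rule 1 : a2 + a3 = a1 + a4
        obtain ⟨x, rfl⟩ : ∃ x, t2 = x + 1 := ⟨t2 - 1, by omega⟩
        obtain ⟨y, rfl⟩ : ∃ y, t3 = y + 1 := ⟨t3 - 1, by omega⟩
        have hval : a2 * x + a3 * y + a4 * (t4 + 1) + a1
            = a2 * (x + 1) + a3 * (y + 1) + a4 * t4 := by linarith [ha14]
        have hval2 : (a2 * x + a3 * y + a4 * (t4 + 1)) * (q2 + 1) + a1 * (q2 + 1)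
            = (a2 * (x + 1) + a3 * (y + 1) + a4 * t4) * (q2 + 1) := by
          rw [← Nat.add_mul, hval]
        have hpos : q2 + 1 ≤ a1 * (q2 + 1) := Nat.le_mul_of_pos_left _ ha1
        have hm : (a2 * x + a3 * y + a4 * (t4 + 1)) * (q2 + 1) + y < n := by linarith
        obtain ⟨u2, u3, u4, k, c1, c2, c3, c4, heq⟩ := ih _ hm x y (t4 + 1) le_rfl
        refine ⟨u2, u3, u4, k + 1, c1, c2, c3, c4, ?_⟩
        have hs : (a1 : ℤ) + a4 = a2 + a3 := by exact_mod_cast hsum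
        push_cast at heq ⊢; linarith [heq]
      · by_cases h3 : q2 ≤ t3
        · -- rule 2 : q2 * a3 = q3 * a2 ; here t2 = 0
          have ht2 : t2 = 0 := by omega
          subst ht2
          have h5 : a3 * (t3 - q2) + a3 * q2 = a3 * t3 := by
            rw [← Nat.mul_add]; congr 1; omega
          have h6 : a3 * q2 = a2 * q3 := by
            rw [Nat.mul_comm a3 q2, Nat.mul_comm a2 q3]; exact h23
          have hval : a2 * q3 + a3 * (t3 - q2) + a4 * t4
              = a2 * 0 + a3 * t3 + a4 * t4 := by linarith
          have hval2 : (a2 * q3 + a3 * (t3 - q2) + a4 * t4) * (q2 + 1)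
              = (a2 * 0 + a3 * t3 + a4 * t4) * (q2 + 1) := by rw [hval]
          have hm : (a2 * q3 + a3 * (t3 - q2) + a4 * t4) * (q2 + 1) + (t3 - q2) < n := by
            rw [hval2]
            have : t3 - q2 < t3 := by omega
            linarith
          obtain ⟨u2, u3, u4, k, c1, c2, c3, c4, heq⟩ := ih _ hm q3 (t3 - q2) t4 le_rfl
          refine ⟨u2, u3, u4, k, c1, c2, c3, c4, ?_⟩
          have h5' : ((t3 : ℤ)) = ((t3 - q2 : ℕ) : ℤ) + q2 := by omega
          have h23' : (q2 : ℤ) * a3 = q3 * a2 := by exact_mod_cast h23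
          rw [h5']; push_cast; linarith [heq]
        · by_cases h2 : q3 + 1 ≤ t2
          · -- rule 4 ; here t3 = 0
            have ht3 : t3 = 0 := by omega
            subst ht3
            have h5 : a2 * (t2 - (q3 + 1)) + a2 * (q3 + 1) = a2 * t2 := by
              rw [← Nat.mul_add]; congr 1; omega
            have h7 : a3 * (q2 - 1) + a3 = a3 * q2 := by
              rw [← Nat.mul_succ]; congr 1; omega
            have h8 : a3 * q2 = a2 * q3 := by
              rw [Nat.mul_comm a3 q2, Nat.mul_comm a2 q3]; exact h23
            have h6 : a2 * (q3 + 1) = a1 + a3 * (q2 - 1) + a4 := by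
              have h9 : a2 * (q3 + 1) = a2 * q3 + a2 := by ring
              omega
            have hval : a2 * (t2 - (q3 + 1)) + a3 * (q2 - 1) + a4 * (t4 + 1) + a1
                = a2 * t2 + a3 * 0 + a4 * t4 := by linarith [h5, h6]
            have hval2 : (a2 * (t2 - (q3 + 1)) + a3 * (q2 - 1) + a4 * (t4 + 1)) * (q2 + 1)
                + a1 * (q2 + 1) = (a2 * t2 + a3 * 0 + a4 * t4) * (q2 + 1) := by
              rw [← Nat.add_mul, hval]
            have hpos : q2 + 1 ≤ a1 * (q2 + 1) := Nat.le_mul_of_pos_left _ ha1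
            have hq21 : q2 - 1 + 1 = q2 := by omega
            have hm : (a2 * (t2 - (q3 + 1)) + a3 * (q2 - 1) + a4 * (t4 + 1)) * (q2 + 1)
                + (q2 - 1) < n := by linarith
            obtain ⟨u2, u3, u4, k, c1, c2, c3, c4, heq⟩ :=
              ih _ hm (t2 - (q3 + 1)) (q2 - 1) (t4 + 1) le_rfl
            refine ⟨u2, u3, u4, k + 1, c1, c2, c3, c4, ?_⟩
            have h5' : ((t2 : ℤ)) = ((t2 - (q3 + 1) : ℕ) : ℤ) + (q3 + 1) := by omega
            have h23' : (q2 : ℤ) * a3 = q3 * a2 := by exact_mod_cast h23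
            have hs : (a1 : ℤ) + a4 = a2 + a3 := by exact_mod_cast hsum
            have hq2' : ((q2 - 1 : ℕ) : ℤ) = (q2 : ℤ) - 1 := by omega
            rw [h5']; push_cast at heq ⊢; rw [hq2'] at heq; linarith [heq]
          · exact ⟨t2, t3, t4, 0, by omega, by omega, by omega, by omega, by push_cast; ring⟩

theorem incongL (a1 a2 a3 a4 D E q1 q2 q3 q4 : ℕ)
    (hq1a : a1 = q1 * D) (hq2a : a2 = q2 * E) (hq3a : a3 = q3 * E) (hq4a : a4 = q4 * D)
    (hsum : a1 + a4 = a2 + a3) (hDq : q2 + q3 = D)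
    (hq1 : 1 ≤ q1) (hq2 : 1 ≤ q2) (hD0 : 0 < D) (ha1 : 0 < a1)
    (hcopE : IsCoprime (E : ℤ) (a1 : ℤ))
    (hcopQ2D : IsCoprime (q2 : ℤ) (D : ℤ)) :
    ∀ u2 u3 u4 v2 v3 v4 : ℕ,
      u2 ≤ q3 → u3 ≤ q2 - 1 → u4 ≤ q1 - 1 → (u2 = 0 ∨ u3 = 0) →
      v2 ≤ q3 → v3 ≤ q2 - 1 → v4 ≤ q1 - 1 → (v2 = 0 ∨ v3 = 0) →
      (a1 : ℤ) ∣ ((u2 * a2 + u3 * a3 + u4 * a4) - (v2 * a2 + v3 * a3 + v4 * a4)) →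
      u2 = v2 ∧ u3 = v3 ∧ u4 = v4 := by
  intro u2 u3 u4 v2 v3 v4 hu2 hu3 hu4 hu0 hv2 hv3 hv4 hv0 hdvd
  have hs : (a1 : ℤ) + a4 = a2 + a3 := by exact_mod_cast hsum
  have hDq' : (q2 : ℤ) + q3 = D := by exact_mod_cast hDq
  have ha2 : (a2 : ℤ) = q2 * E := by exact_mod_cast hq2a
  have ha3 : (a3 : ℤ) = q3 * E := by exact_mod_cast hq3a
  have ha1' : (a1 : ℤ) = q1 * D := by exact_mod_cast hq1a
  have h1 : (a1 : ℤ) ∣ (((u2:ℤ) + u4 - v2 - v4) * a2 + ((u3:ℤ) + u4 - v3 - v4) * a3) := by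
    obtain ⟨c, hc⟩ := hdvd
    exact ⟨c + ((u4:ℤ) - v4), by linear_combination hc - ((u4:ℤ) - v4) * hs⟩
  have h2 : (a1 : ℤ) ∣ (((u2:ℤ) + u4 - v2 - v4) * q2 + ((u3:ℤ) + u4 - v3 - v4) * q3) := by
    refine (hcopE.symm.dvd_of_dvd_mul_left ?_)
    have key2 : ((E:ℤ)) * ((((u2:ℤ) + u4 - v2 - v4) * q2 + ((u3:ℤ) + u4 - v3 - v4) * q3))
        = (((u2:ℤ) + u4 - v2 - v4) * a2 + ((u3:ℤ) + u4 - v3 - v4) * a3) := by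
      rw [ha2, ha3]; ring
    rw [key2]; exact h1
  have hDa1 : (D : ℤ) ∣ a1 := ⟨q1, by rw [ha1']; ring⟩
  have h3 : (D : ℤ) ∣ (q2 : ℤ) * (((u2:ℤ) - u3) - ((v2:ℤ) - v3)) := by
    have hW := hDa1.trans h2
    have key : (q2 : ℤ) * (((u2:ℤ) - u3) - ((v2:ℤ) - v3))
        = ((((u2:ℤ) + u4 - v2 - v4) * q2 + ((u3:ℤ) + u4 - v3 - v4) * q3))
          - (((u3:ℤ) + u4 - v3 - v4)) * D := by
      linear_combination (-((u3:ℤ) + u4 - v3 - v4)) * hDq'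
    rw [key]
    exact dvd_sub hW (dvd_mul_left _ _)
  have h4 : (D : ℤ) ∣ (((u2:ℤ) - u3) - ((v2:ℤ) - v3)) :=
    hcopQ2D.symm.dvd_of_dvd_mul_left h3
  have h5 : (((u2:ℤ) - u3) - ((v2:ℤ) - v3)) = 0 := by
    refine Int.eq_zero_of_abs_lt_dvd h4 ?_
    rw [abs_lt]
    constructor <;> omega
  have h23 : u2 = v2 ∧ u3 = v3 := by omega
  obtain ⟨rfl, rfl⟩ := h23
  refine ⟨rfl, rfl, ?_⟩
  obtain ⟨c, hc⟩ := h2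
  have hc' : ((u4:ℤ) - v4) * D = (q1 * c) * D := by
    rw [ha1'] at hc; linear_combination hc - ((u4:ℤ) - v4) * hDq'
  have hc2 : ((u4:ℤ) - v4) = q1 * c :=
    mul_right_cancel₀ (by exact_mod_cast hD0.ne') hc'
  have h6 : ((u4:ℤ) - v4) = 0 := by
    refine Int.eq_zero_of_abs_lt_dvd ⟨c, hc2⟩ ?_
    rw [abs_lt]
    constructor <;> omega
  omega

set_option maxHeartbeats 1000000 in
theorem stmt_6 (a1 a2 a3 a4 D E q1 q2 q3 q4 : ℕ)
(h1 : 0 < a1) (h12 : a1 < a2) (h23 : a2 < a3) (h34 : a3 < a4)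
    (hgcd : Nat.gcd (Nat.gcd a1 a2) (Nat.gcd a3 a4) = 1)
    (hd12 : ¬ a1 ∣ a2) (hd13 : ¬ a1 ∣ a3) (hd14 : ¬ a1 ∣ a4)
    (hd23 : ¬ a2 ∣ a3) (hd24 : ¬ a2 ∣ a4) (hd34 : ¬ a3 ∣ a4)
    (hsum : a1 + a4 = a2 + a3)
(hD : D = Nat.gcd a1 a4) (hE : E = Nat.gcd a2 a3)
    (hq1 : a1 = q1 * D) (hq2 : a2 = q2 * E) (hq3 : a3 = q3 * E) (hq4 : a4 = q4 * D)
    (hu : a1 + a4 = Nat.gcd a1 a4 * Nat.gcd a2 a3) :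
    {s | s ∈ SG a1 a2 a3 a4 ∧ s - a1 ∉ SG a1 a2 a3 a4}
      = A1 a4 q1 ∪ A2 a2 a4 q1 q3 ∪ A3 a3 a4 q1 q2 ∧
    Disjoint (A1 a4 q1) (A2 a2 a4 q1 q3) ∧
    Disjoint (A1 a4 q1) (A3 a3 a4 q1 q2) ∧
    Disjoint (A2 a2 a4 q1 q3) (A3 a3 a4 q1 q2) ∧
    (∀ x ∈ A1 a4 q1 ∪ A2 a2 a4 q1 q3 ∪ A3 a3 a4 q1 q2,
      ∀ y ∈ A1 a4 q1 ∪ A2 a2 a4 q1 q3 ∪ A3 a3 a4 q1 q2,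
        (a1 : ℤ) ∣ x - y → x = y) := by
  -- positivity
  have ha2 : 0 < a2 := lt_trans h1 h12
  have ha3 : 0 < a3 := lt_trans ha2 h23
  have ha4 : 0 < a4 := lt_trans ha3 h34
  have h1' : 0 < q1 * D := hq1 ▸ h1
  have h2' : 0 < q2 * E := hq2 ▸ ha2
  have h3' : 0 < q3 * E := hq3 ▸ ha3
  have h4' : 0 < q4 * D := hq4 ▸ ha4
  have hq1p : 1 ≤ q1 := Nat.pos_of_ne_zero (by rintro rfl; simp at h1')
  have hD0 : 0 < D := Nat.pos_of_ne_zero (by rintro rfl; simp at h1')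
  have hq2p : 1 ≤ q2 := Nat.pos_of_ne_zero (by rintro rfl; simp at h2')
  have hE0 : 0 < E := Nat.pos_of_ne_zero (by rintro rfl; simp at h2')
  -- multiplicative identities
  have h23m : q2 * a3 = q3 * a2 := by rw [hq2, hq3]; ring
  have h14m : q1 * a4 = q4 * a1 := by rw [hq1, hq4]; ring
  have hDE : a1 + a4 = D * E := by rw [hu, ← hD, ← hE]
  have hDq : q2 + q3 = D := by
    refine Nat.eq_of_mul_eq_mul_right hE0 ?_
    rw [Nat.add_mul, ← hq2, ← hq3, ← hsum, hDE]
  -- coprimality facts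
  have hE' : Nat.gcd q2 q3 * E = E := by
    rw [← Nat.gcd_mul_right, ← hq2, ← hq3]; exact hE.symm
  have hcop23 : Nat.Coprime q2 q3 := by
    refine Nat.eq_of_mul_eq_mul_right hE0 ?_
    rw [one_mul]; exact hE'
  have hcopQ2D : Nat.Coprime q2 D := by
    have h := (Nat.coprime_add_mul_left_right q2 q3 1).mpr hcop23
    have h2 : q3 + q2 * 1 = D := by omega
    rwa [h2] at h
  have hEa2 : E ∣ a2 := by rw [hq2]; exact dvd_mul_left E q2
  have hEa3 : E ∣ a3 := by rw [hq3]; exact dvd_mul_left E q3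
  have hcopEa1 : Nat.Coprime E a1 := by
    have g2 : Nat.gcd E a1 ∣ a2 := (Nat.gcd_dvd_left E a1).trans hEa2
    have g3 : Nat.gcd E a1 ∣ a3 := (Nat.gcd_dvd_left E a1).trans hEa3
    have g1 : Nat.gcd E a1 ∣ a1 := Nat.gcd_dvd_right E a1
    have g4 : Nat.gcd E a1 ∣ a4 := by
      have h5 : a2 + a3 - a1 = a4 := by omega
      have := Nat.dvd_sub (Dvd.dvd.add g2 g3) g1
      rwa [h5] at this
    have : Nat.gcd E a1 ∣ 1 := by
      rw [← hgcd]
      exact Nat.dvd_gcd (Nat.dvd_gcd g1 g2) (Nat.dvd_gcd g3 g4)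
    exact Nat.dvd_one.mp this
  have hcopE : IsCoprime (E : ℤ) (a1 : ℤ) := Nat.isCoprime_iff_coprime.mpr hcopEa1
  have hcopQ2DZ : IsCoprime (q2 : ℤ) (D : ℤ) := Nat.isCoprime_iff_coprime.mpr hcopQ2D
  have R := reduceL a1 a2 a3 a4 q1 q2 q3 q4 hsum h23m h14m hq1p hq2p h1 ha4
  have C := incongL a1 a2 a3 a4 D E q1 q2 q3 q4 hq1 hq2 hq3 hq4 hsum hDq hq1p hq2p hD0 h1
    hcopE hcopQ2DZ
  -- canonical parametrization of the union
  have mem_param : ∀ x ∈ A1 a4 q1 ∪ A2 a2 a4 q1 q3 ∪ A3 a3 a4 q1 q2,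
      ∃ p2 p3 p4 : ℕ, p2 ≤ q3 ∧ p3 ≤ q2 - 1 ∧ p4 ≤ q1 - 1 ∧ (p2 = 0 ∨ p3 = 0) ∧
        x = (p2 * a2 + p3 * a3 + p4 * a4 : ℤ) := by
    rintro x ((⟨t4, ht4, rfl⟩ | ⟨t2, t4, ht2, ht2', ht4, rfl⟩) | ⟨t3, t4, ht3, ht3', ht4, rfl⟩)
    · exact ⟨0, 0, t4, by omega, by omega, ht4, by omega, by push_cast; ring⟩
    · exact ⟨t2, 0, t4, ht2', by omega, ht4, by omega, by push_cast; ring⟩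
    · exact ⟨0, t3, t4, by omega, ht3', ht4, by omega, by push_cast; ring⟩
  -- canonical elements minus a1 are not in SG
  have key : ∀ p2 p3 p4 : ℕ, p2 ≤ q3 → p3 ≤ q2 - 1 → p4 ≤ q1 - 1 → (p2 = 0 ∨ p3 = 0) →
      ((p2 * a2 + p3 * a3 + p4 * a4 : ℤ) - a1) ∉ SG a1 a2 a3 a4 := by
    rintro p2 p3 p4 hp2 hp3 hp4 hp0 ⟨s1, s2, s3, s4, hs⟩
    obtain ⟨u2, u3, u4, k, c1, c2, c3, c4, heq⟩ := R s2 s3 s4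
    have hdvd : (a1 : ℤ) ∣ ((p2 * a2 + p3 * a3 + p4 * a4) - (u2 * a2 + u3 * a3 + u4 * a4)) :=
      ⟨(s1 : ℤ) + 1 + k, by push_cast at hs heq ⊢; linarith⟩
    obtain ⟨e2, e3, e4⟩ := C p2 p3 p4 u2 u3 u4 hp2 hp3 hp4 hp0 c1 c2 c3 c4 hdvd
    subst e2; subst e3; subst e4
    have hz : ((s1 : ℤ) + 1 + k) * a1 = 0 := by push_cast at hs heq ⊢; linarith
    rcases mul_eq_zero.mp hz with h | h
    · have : (0:ℤ) < (s1 : ℤ) + 1 + k := by positivity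
      omega
    · have : (0:ℤ) < a1 := by exact_mod_cast h1
      omega
  -- canonical elements are in SG
  have inSG : ∀ p2 p3 p4 : ℕ, (p2 * a2 + p3 * a3 + p4 * a4 : ℤ) ∈ SG a1 a2 a3 a4 :=
    fun p2 p3 p4 => ⟨0, p2, p3, p4, by push_cast; ring⟩
  refine ⟨?_, ?_, ?_, ?_, ?_⟩
  · ext s
    simp only [Set.mem_setOf_eq]
    constructor
    · rintro ⟨⟨t1, t2, t3, t4, rfl⟩, hnot⟩
      obtain ⟨u2, u3, u4, k, c1, c2, c3, c4, heq⟩ := R t2 t3 t4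
      rcases Nat.eq_zero_or_pos (t1 + k) with hz | hpos
      · have ht1 : t1 = 0 := by omega
        have hk : k = 0 := by omega
        subst ht1; subst hk
        rcases c4 with c4 | c4
        · subst c4
          rcases Nat.eq_zero_or_pos u3 with h3z | h3p
          · subst h3z
            left; left
            exact ⟨u4, c3, by push_cast at heq ⊢; linarith⟩
          · right
            exact ⟨u3, u4, h3p, c2, c3, by push_cast at heq ⊢; linarith⟩
        · subst c4
          rcases Nat.eq_zero_or_pos u2 with h2z | h2p
          · subst h2z
            left; left
            exact ⟨u4, c3, by push_cast at heq ⊢; linarith⟩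
          · left; right
            exact ⟨u2, u4, h2p, c1, c3, by push_cast at heq ⊢; linarith⟩
      · exfalso
        apply hnot
        refine ⟨t1 + k - 1, u2, u3, u4, ?_⟩
        have hc : ((t1 + k - 1 : ℕ) : ℤ) = (t1 : ℤ) + k - 1 := by omega
        rw [hc]; push_cast at heq ⊢; linarith
    · intro hx
      obtain ⟨p2, p3, p4, hp2, hp3, hp4, hp0, rfl⟩ := mem_param _ hx
      exact ⟨inSG p2 p3 p4, key p2 p3 p4 hp2 hp3 hp4 hp0⟩
  · rw [Set.disjoint_left]
    simp only [A1, A2, Set.mem_setOf_eq]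
    rintro x ⟨t4, ht4, rfl⟩ ⟨t2, t4', h1t2, ht2, ht4', hx⟩
    have hdvd : (a1 : ℤ) ∣ ((0 * a2 + 0 * a3 + t4 * a4) - (t2 * a2 + 0 * a3 + t4' * a4)) :=
      ⟨0, by push_cast at hx ⊢; linarith⟩
    obtain ⟨e2, _, _⟩ := C 0 0 t4 t2 0 t4' (by omega) (by omega) ht4 (by omega)
      ht2 (by omega) ht4' (by omega) hdvd
    omega
  · rw [Set.disjoint_left]
    simp only [A1, A3, Set.mem_setOf_eq]
    rintro x ⟨t4, ht4, rfl⟩ ⟨t3, t4', h1t3, ht3, ht4', hx⟩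
    have hdvd : (a1 : ℤ) ∣ ((0 * a2 + 0 * a3 + t4 * a4) - (0 * a2 + t3 * a3 + t4' * a4)) :=
      ⟨0, by push_cast at hx ⊢; linarith⟩
    obtain ⟨_, e3, _⟩ := C 0 0 t4 0 t3 t4' (by omega) (by omega) ht4 (by omega)
      (by omega) ht3 ht4' (by omega) hdvd
    omega
  · rw [Set.disjoint_left]
    simp only [A2, A3, Set.mem_setOf_eq]
    rintro x ⟨t2, t4, h1t2, ht2, ht4, rfl⟩ ⟨t3, t4', h1t3, ht3, ht4', hx⟩
    have hdvd : (a1 : ℤ) ∣ ((t2 * a2 + 0 * a3 + t4 * a4) - (0 * a2 + t3 * a3 + t4' * a4)) :=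
      ⟨0, by push_cast at hx ⊢; linarith⟩
    obtain ⟨e2, _, _⟩ := C t2 0 t4 0 t3 t4' ht2 (by omega) ht4 (by omega)
      (by omega) ht3 ht4' (by omega) hdvd
    omega
  · intro x hx y hy hdvd
    obtain ⟨p2, p3, p4, hp2, hp3, hp4, hp0, rfl⟩ := mem_param _ hx
    obtain ⟨r2, r3, r4, hr2, hr3, hr4, hr0, rfl⟩ := mem_param _ hy
    obtain ⟨e2, e3, e4⟩ := C p2 p3 p4 r2 r3 r4 hp2 hp3 hp4 hp0 hr2 hr3 hr4 hr0 hdvd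
    subst e2; subst e3; subst e4
    rfl
end

section
/- Let S be a unitary numerical semigroup generated by {a1,a2,a3,a4} with a1=q1D, a2=q2E, a3=q3E, a4=q4D, and let T = ⟨a1,a2,a3⟩. Then T is a symmetric numerical semigroup and its Frobenius number is g(T) = (q1−2)·a1 + q2·a3 + (q1−1)·a4 = (q1−2)·a1 + q3·a2 + (q1−1)·a4. -/
set_option linter.all false

def TG (a1 a2 a3 : ℕ) : Set ℕ :=
  {s | ∃ t1 t2 t3 : ℕ, s = t1 * a1 + t2 * a2 + t3 * a3}

namespace Stmt8Aux

def S2 (p q : ℕ) (z : ℤ) : Prop := ∃ i j : ℕ, z = i * p + j * q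

lemma S2_nonneg {p q : ℕ} {z : ℤ} (h : S2 p q z) : 0 ≤ z := by
  obtain ⟨i, j, rfl⟩ := h; positivity

lemma exists_i0 (p q : ℕ) (hq : 0 < q) (hco : Nat.Coprime p q) (z : ℤ) :
    ∃ i0 : ℕ, i0 < q ∧ (q:ℤ) ∣ z - i0 * p := by
  have hco' : IsCoprime (p:ℤ) (q:ℤ) := by
    exact_mod_cast Nat.isCoprime_iff_coprime.mpr hco
  obtain ⟨x, y, hxy⟩ := hco'
  have hqz : (q:ℤ) ≠ 0 := by exact_mod_cast hq.ne'
  refine ⟨((x*z) % q).toNat, ?_, ?_⟩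
  · have h1 : (x*z) % q < q := Int.emod_lt_of_pos _ (by exact_mod_cast hq)
    have h2 : 0 ≤ (x*z) % q := Int.emod_nonneg _ hqz
    omega
  · have h2 : 0 ≤ (x*z) % q := Int.emod_nonneg _ hqz
    have h3 : (((x*z) % q).toNat : ℤ) = (x*z) % q := Int.toNat_of_nonneg h2
    rw [h3]
    have h4 : (q:ℤ) ∣ x*z - (x*z) % q := by
      rw [Int.emod_def]; exact ⟨(x*z)/q, by ring⟩
    obtain ⟨k, hk⟩ := h4
    refine ⟨y*z + k*p, ?_⟩
    have : (x*z) % q = x*z - q*k := by linarith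
    rw [this]
    linear_combination (-z) * hxy

lemma memS2_iff (p q : ℕ) (hq : 0 < q) (hco : Nat.Coprime p q) (z : ℤ) (i0 : ℕ)
    (hlt : i0 < q) (hdvd : (q:ℤ) ∣ z - i0 * p) : S2 p q z ↔ (i0:ℤ) * p ≤ z := by
  have hco' : IsCoprime (q:ℤ) (p:ℤ) := by
    exact_mod_cast Nat.isCoprime_iff_coprime.mpr hco.symm
  constructor
  · rintro ⟨i, j, rfl⟩
    have h1 : (q:ℤ) ∣ ((i:ℤ) - i0) * p := by
      obtain ⟨k, hk⟩ := hdvd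
      exact ⟨k - j, by nlinarith⟩
    have h2 : (q:ℤ) ∣ (i:ℤ) - i0 := hco'.dvd_of_dvd_mul_right h1
    have h3 : (i0:ℤ) ≤ i := by
      by_contra h
      push_neg at h
      obtain ⟨k, hk⟩ := h2
      have hk0 : k < 0 := by nlinarith [hq]
      have : (i:ℤ) - i0 ≤ -q := by
        calc (i:ℤ) - i0 = q * k := hk
        _ ≤ q * (-1) := by
            apply mul_le_mul_of_nonneg_left (by omega) (by positivity)
        _ = -q := by ring
      have : (0:ℤ) ≤ i := by positivity
      have : (i0:ℤ) < q := by exact_mod_cast hlt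
      omega
    nlinarith [Int.natCast_nonneg j, Int.natCast_nonneg q, Int.natCast_nonneg p]
  · intro h
    obtain ⟨k, hk⟩ := hdvd
    have hk0 : 0 ≤ k := by
      nlinarith [hq, show (0:ℤ) < q by exact_mod_cast hq]
    refine ⟨i0, k.toNat, ?_⟩
    have : (k.toNat : ℤ) = k := Int.toNat_of_nonneg hk0
    rw [this]; linarith

lemma sym2 (p q : ℕ) (hp : 0 < p) (hq : 0 < q) (hco : Nat.Coprime p q) (z : ℤ) :
    S2 p q z ↔ ¬ S2 p q ((p:ℤ)*q - p - q - z) := by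
  obtain ⟨i0, hlt, hdvd⟩ := exists_i0 p q hq hco z
  have h1 := memS2_iff p q hq hco z i0 hlt hdvd
  have hlt' : q - 1 - i0 < q := by omega
  have hcast : ((q - 1 - i0 : ℕ) : ℤ) = (q:ℤ) - 1 - i0 := by
    have : (i0:ℤ) < q := by exact_mod_cast hlt
    push_cast [Nat.sub_sub]
    omega
  have hdvd' : (q:ℤ) ∣ ((p:ℤ)*q - p - q - z) - ((q - 1 - i0 : ℕ):ℤ) * p := by
    obtain ⟨k, hk⟩ := hdvd
    refine ⟨-1 - k, ?_⟩
    rw [hcast]; linear_combination -hk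
  have h2 := memS2_iff p q hq hco _ _ hlt' hdvd'
  rw [h1, h2, hcast]
  have hq' : (0:ℤ) < q := by exact_mod_cast hq
  constructor
  · intro h hcon
    nlinarith
  · intro h
    push_neg at h
    -- z > i0*p - q, and q ∣ z - i0*p, so z ≥ i0*p
    obtain ⟨k, hk⟩ := hdvd
    have hk0 : -1 < k := by nlinarith
    have : 0 ≤ k := by omega
    nlinarith

def PT (a1 E p q : ℕ) (z : ℤ) : Prop :=
  ∃ t i j : ℕ, z = t * a1 + E * (i * p + j * q)

lemma PT_nonneg {a1 E p q : ℕ} {z : ℤ} (h : PT a1 E p q z) : 0 ≤ z := by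
  obtain ⟨t, i, j, rfl⟩ := h; positivity

lemma PT_add {a1 E p q : ℕ} {x y : ℤ} (hx : PT a1 E p q x) (hy : PT a1 E p q y) :
    PT a1 E p q (x + y) := by
  obtain ⟨t, i, j, rfl⟩ := hx
  obtain ⟨t', i', j', rfl⟩ := hy
  exact ⟨t + t', i + i', j + j', by push_cast; ring⟩

lemma PT_zero (a1 E p q : ℕ) : PT a1 E p q 0 := ⟨0, 0, 0, by norm_num⟩

lemma notPTg (a1 E p q q1 : ℕ) (hp : 0 < p) (hq : 0 < q) (hE : 0 < E)
    (hco : Nat.Coprime p q) (ha1 : a1 = q1 * (p + q)) (ha1pos : 0 < a1)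
    (hcoE : Nat.Coprime E a1) :
    ¬ PT a1 E p q ((E:ℤ) * ((a1:ℤ) + p*q - p - q) - a1) := by
  rintro ⟨t, i, j, heq⟩
  have hcoE' : IsCoprime ((a1:ℤ)) ((E:ℤ)) := by
    exact_mod_cast Nat.isCoprime_iff_coprime.mpr hcoE.symm
  set u : ℤ := (i:ℤ) * p + j * q with hu
  set c : ℤ := (a1:ℤ) + p*q - p - q with hc
  have h1 : (E:ℤ) * (c - u) = ((t:ℤ)+1) * a1 := by linear_combination heq
  have hdvd : (a1:ℤ) ∣ (E:ℤ) * (c - u) := ⟨(t:ℤ)+1, by linarith⟩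
  have hdvd2 : (a1:ℤ) ∣ c - u := hcoE'.dvd_of_dvd_mul_left hdvd
  have hEpos : (0:ℤ) < E := by exact_mod_cast hE
  have ha1pos' : (0:ℤ) < a1 := by exact_mod_cast ha1pos
  have hcu : 0 < c - u := by
    nlinarith [Int.natCast_nonneg t]
  obtain ⟨k, hk⟩ := hdvd2
  have hk1 : 1 ≤ k := by nlinarith
  have hS : S2 p q ((p:ℤ)*q - p - q - u) := by
    refine ⟨(k-1).toNat * q1, (k-1).toNat * q1, ?_⟩
    have hcast : (((k-1).toNat : ℤ)) = k - 1 := Int.toNat_of_nonneg (by omega)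
    push_cast [hcast]
    have : (a1:ℤ) = (q1:ℤ) * ((p:ℤ) + q) := by exact_mod_cast ha1
    rw [this] at hk
    linear_combination hk - this
  have hSu : S2 p q u := ⟨i, j, rfl⟩
  exact (sym2 p q hp hq hco u).mp hSu hS

lemma PT_compl (a1 E p q q1 : ℕ) (hp : 0 < p) (hq : 0 < q) (hE : 0 < E)
    (hco : Nat.Coprime p q) (ha1 : a1 = q1 * (p + q)) (ha1pos : 0 < a1)
    (hcoE : Nat.Coprime E a1) (z : ℤ) (hz : ¬ PT a1 E p q z) :
    PT a1 E p q ((E:ℤ) * ((a1:ℤ) + p*q - p - q) - a1 - z) := by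
  classical
  have hcoE' : IsCoprime ((E:ℤ)) ((a1:ℤ)) := by
    exact_mod_cast Nat.isCoprime_iff_coprime.mpr hcoE
  have hEpos : (0:ℤ) < E := by exact_mod_cast hE
  have ha1pos' : (0:ℤ) < a1 := by exact_mod_cast ha1pos
  have hppos : (0:ℤ) < p := by exact_mod_cast hp
  have hqpos : (0:ℤ) < q := by exact_mod_cast hq
  -- existence of u in the right class
  have hex : ∃ u : ℕ, S2 p q u ∧ (a1:ℤ) ∣ z - E * u := by
    obtain ⟨x, y, hxy⟩ := hcoE'
    have ha1z : (a1:ℤ) ≠ 0 := ha1pos'.ne'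
    set m : ℤ := (x*z) % a1 with hm
    have hm0 : 0 ≤ m := Int.emod_nonneg _ ha1z
    refine ⟨m.toNat + a1 * p * q, ?_, ?_⟩
    · -- big, hence in S2
      have hbig : (p:ℤ)*q - p - q - ((m.toNat + a1*p*q : ℕ):ℤ) < 0 := by
        push_cast [Int.toNat_of_nonneg hm0]
        nlinarith [hm0, mul_pos hppos hqpos,
          mul_nonneg (mul_nonneg (by linarith : (0:ℤ) ≤ (a1:ℤ) - 1) hppos.le) hqpos.le]
      refine (sym2 p q hp hq hco _).mpr (fun hS => ?_)
      have := S2_nonneg hS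
      omega
    · have h4 : (a1:ℤ) ∣ x*z - m := by
        rw [hm, Int.emod_def]; exact ⟨(x*z)/a1, by ring⟩
      obtain ⟨k, hk⟩ := h4
      refine ⟨y*z + E*k - E*p*q, ?_⟩
      push_cast [Int.toNat_of_nonneg hm0]
      have hmk : m = x*z - a1*k := by linarith
      rw [hmk]
      linear_combination (-z) * hxy -- placeholder2
  set u0 := Nat.find hex with hu0
  obtain ⟨hu0S, hu0d⟩ := Nat.find_spec hex
  -- minimality: u0 - a1 not in S2
  have hmin : ¬ S2 p q ((u0:ℤ) - a1) := by
    intro hS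
    have h0 : 0 ≤ (u0:ℤ) - a1 := S2_nonneg hS
    have hle : a1 ≤ u0 := by exact_mod_cast by omega
    have hcast : ((u0 - a1 : ℕ):ℤ) = (u0:ℤ) - a1 := by push_cast [hle]; ring
    have hS' : S2 p q ((u0 - a1 : ℕ):ℤ) := by rw [hcast]; exact hS
    have hd' : (a1:ℤ) ∣ z - E * ((u0 - a1 : ℕ):ℤ) := by
      rw [hcast]
      obtain ⟨k, hk⟩ := hu0d
      exact ⟨k + E, by linear_combination hk⟩
    have hlt : u0 - a1 < u0 := by omega
    exact Nat.find_min hex hlt ⟨hS', hd'⟩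
  -- z < E * u0
  have hzlt : z < (E:ℤ) * u0 := by
    by_contra h
    push_neg at h
    obtain ⟨k, hk⟩ := hu0d
    have hk0 : 0 ≤ k := by nlinarith
    obtain ⟨i, j, hij⟩ := hu0S
    apply hz
    refine ⟨k.toNat, i, j, ?_⟩
    push_cast [Int.toNat_of_nonneg hk0]
    linear_combination hk + (E:ℤ) * hij
  obtain ⟨k, hk⟩ := hu0d
  have hkneg : k ≤ -1 := by nlinarith
  -- symmetry gives the complement element
  have h5 : S2 p q ((p:ℤ)*q - p - q - ((u0:ℤ) - a1)) := by
    refine (sym2 p q hp hq hco _).mpr (fun hS => ?_)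
    apply hmin
    have : (p:ℤ)*q - p - q - ((p:ℤ)*q - p - q - ((u0:ℤ) - a1)) = (u0:ℤ) - a1 := by ring
    rwa [this] at hS
  obtain ⟨i, j, hij⟩ := h5
  refine ⟨(-k-1).toNat, i, j, ?_⟩
  push_cast [Int.toNat_of_nonneg (show (0:ℤ) ≤ -k-1 by omega)]
  linear_combination (-1 : ℤ) * hk + (E:ℤ) * hij

lemma symT (a1 E p q q1 : ℕ) (hp : 0 < p) (hq : 0 < q) (hE : 0 < E)
    (hco : Nat.Coprime p q) (ha1 : a1 = q1 * (p + q)) (ha1pos : 0 < a1)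
    (hcoE : Nat.Coprime E a1) (z : ℤ) :
    PT a1 E p q z ↔ ¬ PT a1 E p q ((E:ℤ) * ((a1:ℤ) + p*q - p - q) - a1 - z) := by
  constructor
  · intro hz hgz
    have hsum := PT_add hz hgz
    have heq : z + ((E:ℤ) * ((a1:ℤ) + p*q - p - q) - a1 - z)
        = (E:ℤ) * ((a1:ℤ) + p*q - p - q) - a1 := by ring
    rw [heq] at hsum
    exact notPTg a1 E p q q1 hp hq hE hco ha1 ha1pos hcoE hsum
  · intro h
    by_contra hz
    have := PT_compl a1 E p q q1 hp hq hE hco ha1 ha1pos hcoE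
      ((E:ℤ) * ((a1:ℤ) + p*q - p - q) - a1 - z)
      h
    have heq : (E:ℤ) * ((a1:ℤ) + p*q - p - q) - a1
        - ((E:ℤ) * ((a1:ℤ) + p*q - p - q) - a1 - z) = z := by ring
    rw [heq] at this
    exact hz this

lemma count_half (T : Set ℕ) (g : ℕ) (hgnot : g ∉ T)
    (hpair : ∀ n : ℕ, n ≤ g → (n ∈ T ↔ (g - n) ∉ T)) :
    {t ∈ T | t < g}.ncard = (g + 1) / 2 ∧ Odd g := by
  classical
  have hodd : Odd g := by
    rcases Nat.even_or_odd g with he | ho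
    · exfalso
      obtain ⟨m, hm⟩ := he
      have hps := hpair m (by omega)
      have hsub : g - m = m := by omega
      rw [hsub] at hps
      tauto
    · exact ho
  set A := (Finset.range (g+1)).filter (fun t => t ∈ T) with hAdef
  set B := (Finset.range (g+1)).filter (fun t => t ∉ T) with hBdef
  have hsetA : {t ∈ T | t < g} = (A : Set ℕ) := by
    ext t
    simp only [Set.mem_setOf_eq, hAdef, Finset.coe_filter, Finset.mem_range]
    constructor
    · rintro ⟨ht, hlt⟩; exact ⟨by omega, ht⟩
    · rintro ⟨hlt, ht⟩
      refine ⟨ht, ?_⟩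
      rcases (Nat.lt_succ_iff.mp hlt).lt_or_eq with h | h
      · exact h
      · exact absurd (h ▸ ht) hgnot
  have hAB : A.card + B.card = g + 1 := by
    have h := Finset.card_filter_add_card_filter_not
      (s := Finset.range (g+1)) (p := fun t => t ∈ T)
    simpa [hAdef, hBdef] using h
  have hcardeq : A.card = B.card := by
    apply Finset.card_bij (fun t _ => g - t)
    · intro t ht
      simp only [hAdef, hBdef, Finset.mem_filter, Finset.mem_range] at ht ⊢
      obtain ⟨hlt, hmemT⟩ := ht
      exact ⟨by omega, (hpair t (by omega)).mp hmemT⟩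
    · intro t1 h1 t2 h2 heq
      simp only [hAdef, Finset.mem_filter, Finset.mem_range] at h1 h2
      omega
    · intro s hs
      simp only [hAdef, hBdef, Finset.mem_filter, Finset.mem_range] at hs ⊢
      obtain ⟨hlt, hns⟩ := hs
      refine ⟨g - s, ⟨by omega, ?_⟩, by omega⟩
      by_contra h
      exact hns ((hpair s (by omega)).mpr h)
  refine ⟨?_, hodd⟩
  rw [hsetA, Set.ncard_coe_finset]
  obtain ⟨kk, hkk⟩ := hodd
  omega

end Stmt8Aux


open Stmt8Aux

theorem stmt_8 (a1 a2 a3 a4 D E q1 q2 q3 q4 : ℕ)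
(h1 : 0 < a1) (h12 : a1 < a2) (h23 : a2 < a3) (h34 : a3 < a4)
    (hgcd : Nat.gcd (Nat.gcd a1 a2) (Nat.gcd a3 a4) = 1)
    (hd12 : ¬ a1 ∣ a2) (hd13 : ¬ a1 ∣ a3) (hd14 : ¬ a1 ∣ a4)
    (hd23 : ¬ a2 ∣ a3) (hd24 : ¬ a2 ∣ a4) (hd34 : ¬ a3 ∣ a4)
    (hsum : a1 + a4 = a2 + a3)
(hD : D = Nat.gcd a1 a4) (hE : E = Nat.gcd a2 a3)
    (hq1 : a1 = q1 * D) (hq2 : a2 = q2 * E) (hq3 : a3 = q3 * E) (hq4 : a4 = q4 * D)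
    (hu : a1 + a4 = Nat.gcd a1 a4 * Nat.gcd a2 a3) :
    ∃ g : ℕ, IsGreatest {n : ℕ | n ∉ TG a1 a2 a3} g ∧
      Odd g ∧ {t ∈ TG a1 a2 a3 | t < g}.ncard = (g + 1) / 2 ∧
      g = (q1 - 2) * a1 + q2 * a3 + (q1 - 1) * a4 ∧
      g = (q1 - 2) * a1 + q3 * a2 + (q1 - 1) * a4 := by
  classical
  have h2pos : 0 < a2 := by omega
  have h3pos : 0 < a3 := by omega
  have h4pos : 0 < a4 := by omega
  have hDpos : 0 < D := by
    rcases Nat.eq_zero_or_pos D with h | h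
    · rw [h, mul_zero] at hq1; omega
    · exact h
  have hEpos : 0 < E := by
    rcases Nat.eq_zero_or_pos E with h | h
    · rw [h, mul_zero] at hq2; omega
    · exact h
  have hq1pos : 0 < q1 := by
    rcases Nat.eq_zero_or_pos q1 with h | h
    · rw [h, zero_mul] at hq1; omega
    · exact h
  have hq2pos : 0 < q2 := by
    rcases Nat.eq_zero_or_pos q2 with h | h
    · rw [h, zero_mul] at hq2; omega
    · exact h
  have hq3pos : 0 < q3 := by
    rcases Nat.eq_zero_or_pos q3 with h | h
    · rw [h, zero_mul] at hq3; omega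
    · exact h
  have hq4pos : 0 < q4 := by
    rcases Nat.eq_zero_or_pos q4 with h | h
    · rw [h, zero_mul] at hq4; omega
    · exact h
  have hq1ge2 : 2 ≤ q1 := by
    rcases Nat.lt_or_ge q1 2 with h | h
    · exfalso
      have hq1one : q1 = 1 := by omega
      apply hd14
      rw [hq1, hq1one, one_mul, hq4]
      exact ⟨q4, by ring⟩
    · exact h
  have huDE : a1 + a4 = D * E := by rw [hD, hE]; exact hu
  have hEq : E = q1 + q4 := by
    have h : (q1 + q4) * D = D * E := by
      rw [← huDE, hq1, hq4]; ring
    have h2 : D * (q1 + q4) = D * E := by rw [← h]; ring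
    exact Nat.eq_of_mul_eq_mul_left hDpos h2.symm
  have hDq : D = q2 + q3 := by
    have h : (q2 + q3) * E = D * E := by
      rw [← huDE, hsum, hq2, hq3]; ring
    exact (Nat.eq_of_mul_eq_mul_right hEpos h).symm
  have hcoq23 : Nat.Coprime q2 q3 := by
    have h : Nat.gcd q2 q3 * E = 1 * E := by
      rw [one_mul, ← Nat.gcd_mul_right, ← hq2, ← hq3, ← hE]
    exact Nat.eq_of_mul_eq_mul_right hEpos h
  have hcoq14 : Nat.Coprime q1 q4 := by
    have h : Nat.gcd q1 q4 * D = 1 * D := by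
      rw [one_mul, ← Nat.gcd_mul_right, ← hq1, ← hq4, ← hD]
    exact Nat.eq_of_mul_eq_mul_right hDpos h
  have hcoDE : Nat.Coprime D E := by
    have hDa1 : D ∣ a1 := ⟨q1, by rw [hq1]; ring⟩
    have hDa4 : D ∣ a4 := ⟨q4, by rw [hq4]; ring⟩
    have hEa2 : E ∣ a2 := ⟨q2, by rw [hq2]; ring⟩
    have hEa3 : E ∣ a3 := ⟨q3, by rw [hq3]; ring⟩
    have h : Nat.gcd D E ∣ Nat.gcd (Nat.gcd a1 a2) (Nat.gcd a3 a4) :=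
      Nat.dvd_gcd
        (Nat.dvd_gcd ((Nat.gcd_dvd_left D E).trans hDa1)
          ((Nat.gcd_dvd_right D E).trans hEa2))
        (Nat.dvd_gcd ((Nat.gcd_dvd_right D E).trans hEa3)
          ((Nat.gcd_dvd_left D E).trans hDa4))
    rw [hgcd] at h
    exact Nat.dvd_one.mp h
  have hcoEq1 : Nat.Coprime E q1 := by
    rw [hEq]
    simpa [Nat.add_comm] using (Nat.coprime_add_self_left (m := q4) (n := q1)).mpr hcoq14.symm
  have hcoEa1 : Nat.Coprime E a1 := by
    rw [hq1]
    exact Nat.Coprime.mul_right hcoEq1 hcoDE.symm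
  have ha1eq : a1 = q1 * (q2 + q3) := by rw [hq1, hDq]
  set gN := (q1 - 2) * a1 + q2 * a3 + (q1 - 1) * a4 with hgNdef
  -- integer identity for gN
  have e1 : (a1:ℤ) = (q1:ℤ) * ((q2:ℤ) + q3) := by
    have : a1 = q1 * (q2 + q3) := ha1eq
    exact_mod_cast congrArg (Nat.cast : ℕ → ℤ) this
  have e3 : (a3:ℤ) = (q3:ℤ) * ((q1:ℤ) + q4) := by
    have : a3 = q3 * (q1 + q4) := by rw [hq3, hEq]
    exact_mod_cast congrArg (Nat.cast : ℕ → ℤ) this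
  have e4 : (a4:ℤ) = (q4:ℤ) * ((q2:ℤ) + q3) := by
    have : a4 = q4 * (q2 + q3) := by rw [hq4, hDq]
    exact_mod_cast congrArg (Nat.cast : ℕ → ℤ) this
  have eE : (E:ℤ) = (q1:ℤ) + q4 := by exact_mod_cast congrArg (Nat.cast : ℕ → ℤ) hEq
  have hgZ : ((gN:ℕ):ℤ) = (E:ℤ) * ((a1:ℤ) + q2*q3 - q2 - q3) - a1 := by
    rw [hgNdef]
    push_cast
    rw [show ((q1 - 2 : ℕ):ℤ) = (q1:ℤ) - 2 by omega,
        show ((q1 - 1 : ℕ):ℤ) = (q1:ℤ) - 1 by omega,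
        e1, e3, e4, eE]
    ring
  -- membership bridge
  have hmem : ∀ n : ℕ, n ∈ TG a1 a2 a3 ↔ PT a1 E q2 q3 (n:ℤ) := by
    intro n
    constructor
    · rintro ⟨t1, t2, t3, rfl⟩
      exact ⟨t1, t2, t3, by push_cast [hq2, hq3]; ring⟩
    · rintro ⟨t, i, j, h⟩
      refine ⟨t, i, j, ?_⟩
      have h2 : (n:ℤ) = ((t * a1 + i * a2 + j * a3 : ℕ):ℤ) := by
        push_cast [hq2, hq3]
        linear_combination h
      exact_mod_cast h2
  -- symmetry
  have hsym : ∀ z : ℤ, PT a1 E q2 q3 z ↔ ¬ PT a1 E q2 q3 ((gN:ℤ) - z) := by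
    intro z
    rw [hgZ]
    exact symT a1 E q2 q3 q1 hq2pos hq3pos hEpos hcoq23 ha1eq h1 hcoEa1 z
  have hgnot : gN ∉ TG a1 a2 a3 := by
    rw [hmem]
    intro hPT
    have h0 := (hsym 0).mp (PT_zero a1 E q2 q3)
    rw [sub_zero] at h0
    exact h0 hPT
  have hcompl : ∀ n : ℕ, n ∉ TG a1 a2 a3 → PT a1 E q2 q3 ((gN:ℤ) - n) := by
    intro n hn
    by_contra h
    exact hn ((hmem n).mpr ((hsym n).mpr h))
  have hub : ∀ n : ℕ, n ∉ TG a1 a2 a3 → n ≤ gN := by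
    intro n hn
    have h := PT_nonneg (hcompl n hn)
    have : (n:ℤ) ≤ (gN:ℤ) := by linarith
    exact_mod_cast this
  have pairNat : ∀ n : ℕ, n ≤ gN → (n ∈ TG a1 a2 a3 ↔ (gN - n) ∉ TG a1 a2 a3) := by
    intro n hn
    have hcast : ((gN - n : ℕ):ℤ) = (gN:ℤ) - n := by omega
    rw [hmem n, hmem (gN - n), hcast]
    exact hsym n
  obtain ⟨hcount, hodd⟩ := count_half (TG a1 a2 a3) gN hgnot pairNat
  refine ⟨gN, ⟨hgnot, fun n hn => hub n hn⟩, hodd, hcount, rfl, ?_⟩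
  have hq23 : q2 * a3 = q3 * a2 := by rw [hq2, hq3]; ring
  rw [hgNdef, hq23]
end

section
/- Let S be a unitary numerical semigroup generated by {a1,a2,a3,a4} and let n = a2 − a1 = a4 − a3. If I = (0+S) ∪ (n+S) is the relative ideal generated by {0,n}, then the dual S−I = {z ∈ ℤ : z+I ⊆ S} equals (a1+S) ∪ (a3+S). -/
/-- The dual S - I of a relative ideal I in S. -/
def dual (S I : Set ℤ) : Set ℤ := {z | ∀ i ∈ I, z + i ∈ S}

lemma SG_add {a1 a2 a3 a4 : ℕ} {x y : ℤ} (hx : x ∈ SG a1 a2 a3 a4)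
    (hy : y ∈ SG a1 a2 a3 a4) : x + y ∈ SG a1 a2 a3 a4 := by
  obtain ⟨t1, t2, t3, t4, ht⟩ := hx
  obtain ⟨u1, u2, u3, u4, hu⟩ := hy
  exact ⟨t1 + u1, t2 + u2, t3 + u3, t4 + u4, by push_cast; rw [ht, hu]; ring⟩

lemma SG_zero {a1 a2 a3 a4 : ℕ} : (0 : ℤ) ∈ SG a1 a2 a3 a4 :=
  ⟨0, 0, 0, 0, by norm_num⟩

theorem stmt_13 (a1 a2 a3 a4 : ℕ)
(h1 : 0 < a1) (h12 : a1 < a2) (h23 : a2 < a3) (h34 : a3 < a4)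
    (hgcd : Nat.gcd (Nat.gcd a1 a2) (Nat.gcd a3 a4) = 1)
    (hd12 : ¬ a1 ∣ a2) (hd13 : ¬ a1 ∣ a3) (hd14 : ¬ a1 ∣ a4)
    (hd23 : ¬ a2 ∣ a3) (hd24 : ¬ a2 ∣ a4) (hd34 : ¬ a3 ∣ a4)
    (hsum : a1 + a4 = a2 + a3)
    (hu : a1 + a4 = Nat.gcd a1 a4 * Nat.gcd a2 a3)
    (n : ℕ) (hn : n = a2 - a1) :
    dual (SG a1 a2 a3 a4) {z | z ∈ SG a1 a2 a3 a4 ∨ z - n ∈ SG a1 a2 a3 a4}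
      = {z | z - (a1:ℤ) ∈ SG a1 a2 a3 a4 ∨ z - (a3:ℤ) ∈ SG a1 a2 a3 a4} := by
  -- setup: d1 = gcd a1 a4, d2 = gcd a2 a3, a_i = d*b
  obtain ⟨b1, hb1'⟩ : Nat.gcd a1 a4 ∣ a1 := Nat.gcd_dvd_left a1 a4
  obtain ⟨b4, hb4'⟩ : Nat.gcd a1 a4 ∣ a4 := Nat.gcd_dvd_right a1 a4
  obtain ⟨b2, hb2'⟩ : Nat.gcd a2 a3 ∣ a2 := Nat.gcd_dvd_left a2 a3
  obtain ⟨b3, hb3'⟩ : Nat.gcd a2 a3 ∣ a3 := Nat.gcd_dvd_right a2 a3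
  set d1 := Nat.gcd a1 a4 with hd1def
  set d2 := Nat.gcd a2 a3 with hd2def
  have hd1pos : 0 < d1 := Nat.gcd_pos_of_pos_left _ h1
  have hd2pos : 0 < d2 := Nat.gcd_pos_of_pos_left _ (lt_trans h1 h12)
  have hb1pos : 0 < b1 := by rcases Nat.eq_zero_or_pos b1 with h | h; · simp [h] at hb1'; omega
                             · exact h
  have hb2pos : 0 < b2 := by rcases Nat.eq_zero_or_pos b2 with h | h; · simp [h] at hb2'; omega
                             · exact h
  have hb3pos : 0 < b3 := by rcases Nat.eq_zero_or_pos b3 with h | h; · simp [h] at hb3'; omega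
                             · exact h
  have hb4pos : 0 < b4 := by rcases Nat.eq_zero_or_pos b4 with h | h; · simp [h] at hb4'; omega
                             · exact h
  have hb14 : b1 + b4 = d2 := by
    have h : d1 * (b1 + b4) = d1 * d2 := by rw [Nat.mul_add, ← hb1', ← hb4']; exact hu
    exact Nat.eq_of_mul_eq_mul_left hd1pos h
  have hb23 : b2 + b3 = d1 := by
    have h : d2 * (b2 + b3) = d2 * d1 := by
      rw [Nat.mul_add, ← hb2', ← hb3', mul_comm d2 d1]; omega
    exact Nat.eq_of_mul_eq_mul_left hd2pos h
  have hcopb14 : Nat.Coprime b1 b4 := by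
    have h : d1 * Nat.gcd b1 b4 = d1 * 1 := by
      rw [← Nat.gcd_mul_left, ← hb1', ← hb4', mul_one]
    exact Nat.eq_of_mul_eq_mul_left hd1pos h
  have hcopb23 : Nat.Coprime b2 b3 := by
    have h : d2 * Nat.gcd b2 b3 = d2 * 1 := by
      rw [← Nat.gcd_mul_left, ← hb2', ← hb3', mul_one]
    exact Nat.eq_of_mul_eq_mul_left hd2pos h
  have hcopb1d2 : Nat.Coprime b1 d2 := by
    rw [← hb14, add_comm]; exact Nat.coprime_add_self_right.mpr hcopb14
  have hcopb2d1 : Nat.Coprime b2 d1 := by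
    rw [← hb23, add_comm]; exact Nat.coprime_add_self_right.mpr hcopb23
  have hcopd : Nat.Coprime d1 d2 := by
    have h12' : Nat.gcd d1 d2 ∣ Nat.gcd a1 a2 :=
      Nat.dvd_gcd ((Nat.gcd_dvd_left d1 d2).trans (Nat.gcd_dvd_left a1 a4))
        ((Nat.gcd_dvd_right d1 d2).trans (Nat.gcd_dvd_left a2 a3))
    have h34' : Nat.gcd d1 d2 ∣ Nat.gcd a3 a4 :=
      Nat.dvd_gcd ((Nat.gcd_dvd_right d1 d2).trans (Nat.gcd_dvd_right a2 a3))
        ((Nat.gcd_dvd_left d1 d2).trans (Nat.gcd_dvd_right a1 a4))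
    have := Nat.dvd_gcd h12' h34'
    rw [hgcd] at this
    exact Nat.dvd_one.mp this
  -- integer versions
  have iA1 : (a1:ℤ) = (d1:ℤ) * (b1:ℤ) := by exact_mod_cast congrArg (Nat.cast : ℕ → ℤ) hb1'
  have iA2 : (a2:ℤ) = (d2:ℤ) * (b2:ℤ) := by exact_mod_cast congrArg (Nat.cast : ℕ → ℤ) hb2'
  have iA3 : (a3:ℤ) = (d2:ℤ) * (b3:ℤ) := by exact_mod_cast congrArg (Nat.cast : ℕ → ℤ) hb3'
  have iA4 : (a4:ℤ) = (d1:ℤ) * (b4:ℤ) := by exact_mod_cast congrArg (Nat.cast : ℕ → ℤ) hb4'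
  have ib14 : (b1:ℤ) + (b4:ℤ) = (d2:ℤ) := by exact_mod_cast congrArg (Nat.cast : ℕ → ℤ) hb14
  have ib23 : (b2:ℤ) + (b3:ℤ) = (d1:ℤ) := by exact_mod_cast congrArg (Nat.cast : ℕ → ℤ) hb23
  have hnZ : (n:ℤ) = (a2:ℤ) - (a1:ℤ) := by omega
  have hnZ' : (n:ℤ) = (a4:ℤ) - (a3:ℤ) := by omega
  have ha1S : (a1:ℤ) ∈ SG a1 a2 a3 a4 := ⟨1, 0, 0, 0, by push_cast; ring⟩
  have ha2S : (a2:ℤ) ∈ SG a1 a2 a3 a4 := ⟨0, 1, 0, 0, by push_cast; ring⟩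
  have ha3S : (a3:ℤ) ∈ SG a1 a2 a3 a4 := ⟨0, 0, 1, 0, by push_cast; ring⟩
  have ha4S : (a4:ℤ) ∈ SG a1 a2 a3 a4 := ⟨0, 0, 0, 1, by push_cast; ring⟩
  ext z
  simp only [dual, Set.mem_setOf_eq]
  constructor
  · intro hz
    have hzS : z ∈ SG a1 a2 a3 a4 := by
      have := hz 0 (Or.inl SG_zero); simpa using this
    have hznS : z + (n:ℤ) ∈ SG a1 a2 a3 a4 :=
      hz (n:ℤ) (Or.inr (by simpa using (SG_zero (a1 := a1) (a2 := a2) (a3 := a3) (a4 := a4))))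
    obtain ⟨t1, t2, t3, t4, htz⟩ := hzS
    rcases Nat.eq_zero_or_pos t1 with ht1 | ht1
    swap
    · left
      refine ⟨t1 - 1, t2, t3, t4, ?_⟩
      have c : ((t1 - 1 : ℕ) : ℤ) = (t1:ℤ) - 1 := by omega
      rw [c]; linear_combination htz
    rcases Nat.eq_zero_or_pos t3 with ht3 | ht3
    swap
    · right
      refine ⟨t1, t2, t3 - 1, t4, ?_⟩
      have c : ((t3 - 1 : ℕ) : ℤ) = (t3:ℤ) - 1 := by omega
      rw [c]; linear_combination htz
    subst ht1 ht3
    simp only [Nat.cast_zero, zero_mul, add_zero, zero_add] at htz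
    rcases le_or_gt b1 t4 with h41 | h41
    · left
      refine ⟨b4 - 1, t2, 0, t4 - b1, ?_⟩
      have c1 : ((b4 - 1 : ℕ) : ℤ) = (b4:ℤ) - 1 := by omega
      have c2 : ((t4 - b1 : ℕ) : ℤ) = (t4:ℤ) - (b1:ℤ) := by omega
      rw [c1, c2]; push_cast
      linear_combination htz - (b4:ℤ) * iA1 + (b1:ℤ) * iA4
    rcases le_or_gt b3 t2 with h32 | h32
    · right
      refine ⟨0, t2 - b3, b2 - 1, t4, ?_⟩
      have c1 : ((b2 - 1 : ℕ) : ℤ) = (b2:ℤ) - 1 := by omega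
      have c2 : ((t2 - b3 : ℕ) : ℤ) = (t2:ℤ) - (b3:ℤ) := by omega
      rw [c1, c2]; push_cast
      linear_combination htz + (b3:ℤ) * iA2 - (b2:ℤ) * iA3
    -- contradiction case : t4 < b1, t2 < b3
    exfalso
    obtain ⟨s1, s2, s3, s4, hs⟩ := hznS
    have hE : ((t2:ℤ) + 1) * ((d2:ℤ) * (b2:ℤ)) + (t4:ℤ) * ((d1:ℤ) * (b4:ℤ))
        - (d1:ℤ) * (b1:ℤ)
        = (s1:ℤ) * ((d1:ℤ) * (b1:ℤ)) + (s2:ℤ) * ((d2:ℤ) * (b2:ℤ))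
          + (s3:ℤ) * ((d2:ℤ) * (b3:ℤ)) + (s4:ℤ) * ((d1:ℤ) * (b4:ℤ)) := by
      rw [← iA1, ← iA2, ← iA3, ← iA4]
      linear_combination hs - htz - hnZ
    have icop21 : IsCoprime (d2:ℤ) (d1:ℤ) :=
      Nat.isCoprime_iff_coprime.mpr hcopd.symm
    have icop2b1 : IsCoprime (d2:ℤ) (b1:ℤ) :=
      Nat.isCoprime_iff_coprime.mpr hcopb1d2.symm
    have icop1b2 : IsCoprime (d1:ℤ) (b2:ℤ) :=
      Nat.isCoprime_iff_coprime.mpr hcopb2d1.symm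
    have hdvd2 : (d2:ℤ) ∣ ((s1:ℤ) - (s4:ℤ) + (t4:ℤ) + 1) := by
      have h0 : (d2:ℤ) ∣ (d1:ℤ) * ((t4:ℤ) * (b4:ℤ) - (b1:ℤ) - (s1:ℤ) * (b1:ℤ)
          - (s4:ℤ) * (b4:ℤ)) :=
        ⟨(s2:ℤ) * (b2:ℤ) + (s3:ℤ) * (b3:ℤ) - ((t2:ℤ) + 1) * (b2:ℤ), by linear_combination hE⟩
      have hX := icop21.dvd_of_dvd_mul_left h0
      have h2' : (d2:ℤ) ∣ (b1:ℤ) * ((s1:ℤ) - (s4:ℤ) + (t4:ℤ) + 1) := by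
        have hid : (b1:ℤ) * ((s1:ℤ) - (s4:ℤ) + (t4:ℤ) + 1)
            = (d2:ℤ) * ((t4:ℤ) - (s4:ℤ))
              - ((t4:ℤ) * (b4:ℤ) - (b1:ℤ) - (s1:ℤ) * (b1:ℤ) - (s4:ℤ) * (b4:ℤ)) := by
          linear_combination ((t4:ℤ) - (s4:ℤ)) * ib14
        rw [hid]
        exact dvd_sub (Dvd.intro _ rfl) hX
      exact icop2b1.dvd_of_dvd_mul_left h2'
    have hdvd1 : (d1:ℤ) ∣ ((s2:ℤ) - (s3:ℤ) - (t2:ℤ) - 1) := by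
      have h0 : (d1:ℤ) ∣ (d2:ℤ) * ((s2:ℤ) * (b2:ℤ) + (s3:ℤ) * (b3:ℤ)
          - ((t2:ℤ) + 1) * (b2:ℤ)) :=
        ⟨(t4:ℤ) * (b4:ℤ) - (b1:ℤ) - (s1:ℤ) * (b1:ℤ) - (s4:ℤ) * (b4:ℤ), by linear_combination -hE⟩
      have hY := (Nat.isCoprime_iff_coprime.mpr (hcopd : Nat.Coprime d1 d2)).dvd_of_dvd_mul_left h0
      have h2' : (d1:ℤ) ∣ (b2:ℤ) * ((s2:ℤ) - (s3:ℤ) - (t2:ℤ) - 1) := by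
        have hid : (b2:ℤ) * ((s2:ℤ) - (s3:ℤ) - (t2:ℤ) - 1)
            = ((s2:ℤ) * (b2:ℤ) + (s3:ℤ) * (b3:ℤ) - ((t2:ℤ) + 1) * (b2:ℤ))
              - (d1:ℤ) * (s3:ℤ) := by
          linear_combination (-(s3:ℤ)) * ib23
        rw [hid]
        exact dvd_sub hY (Dvd.intro _ rfl)
      exact icop1b2.dvd_of_dvd_mul_left h2'
    obtain ⟨p, hp⟩ := hdvd2
    obtain ⟨q, hq⟩ := hdvd1
    have key : (d1:ℤ) * (d2:ℤ) * ((s4:ℤ) + (s3:ℤ) + p * (b1:ℤ) + q * (b2:ℤ) - (t4:ℤ)) = 0 := by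
      linear_combination (-1 : ℤ) * hE - (d1:ℤ) * (b1:ℤ) * hp - (d2:ℤ) * (b2:ℤ) * hq
        - (d1:ℤ) * ((s4:ℤ) - (t4:ℤ)) * ib14 - (d2:ℤ) * (s3:ℤ) * ib23
    have hdd : (0:ℤ) < (d1:ℤ) * (d2:ℤ) := by positivity
    have keq : (s4:ℤ) + (s3:ℤ) + p * (b1:ℤ) + q * (b2:ℤ) = (t4:ℤ) := by
      rcases mul_eq_zero.mp key with h | h
      · exact absurd h (by positivity)
      · linarith
    have hA : (0:ℤ) ≤ (s3:ℤ) + q * (b2:ℤ) := by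
      rcases le_or_gt 0 q with hq0 | hq0
      · have := mul_nonneg hq0 (show (0:ℤ) ≤ (b2:ℤ) by positivity)
        positivity
      · have hq1 : q ≤ -1 := by omega
        have key3 : (s3:ℤ) + q * (b2:ℤ) = (s2:ℤ) - (t2:ℤ) - 1 - q * (b3:ℤ) := by
          linear_combination -hq + q * ib23
        have hmul : q * (b3:ℤ) ≤ (-1) * (b3:ℤ) :=
          mul_le_mul_of_nonneg_right hq1 (by positivity)
        have h32' : (t2:ℤ) + 1 ≤ (b3:ℤ) := by exact_mod_cast h32
        have hs2nn : (0:ℤ) ≤ (s2:ℤ) := by positivity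
        linarith
    have hB : (t4:ℤ) + 1 ≤ (s4:ℤ) + p * (b1:ℤ) := by
      rcases le_or_gt 1 p with hp1 | hp1
      · have hmul : 1 * (b1:ℤ) ≤ p * (b1:ℤ) :=
          mul_le_mul_of_nonneg_right hp1 (by positivity)
        have h41' : (t4:ℤ) + 1 ≤ (b1:ℤ) := by exact_mod_cast h41
        have hs4nn : (0:ℤ) ≤ (s4:ℤ) := by positivity
        linarith
      · have hp0 : p ≤ 0 := by omega
        have key3 : (s4:ℤ) + p * (b1:ℤ) = (s1:ℤ) + (t4:ℤ) + 1 - p * (b4:ℤ) := by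
          linear_combination -hp + p * ib14
        have hmul : p * (b4:ℤ) ≤ 0 :=
          mul_nonpos_of_nonpos_of_nonneg hp0 (by positivity)
        have hs1nn : (0:ℤ) ≤ (s1:ℤ) := by positivity
        linarith
    linarith
  · intro hz i hi
    rcases hz with hz | hz <;> rcases hi with hi | hi
    · have h : z + i = (z - (a1:ℤ)) + (i + (a1:ℤ)) := by ring
      rw [h]; exact SG_add hz (SG_add hi ha1S)
    · have h : z + i = (z - (a1:ℤ)) + ((i - (n:ℤ)) + (a2:ℤ)) := by rw [hnZ]; ring
      rw [h]; exact SG_add hz (SG_add hi ha2S)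
    · have h : z + i = (z - (a3:ℤ)) + (i + (a3:ℤ)) := by ring
      rw [h]; exact SG_add hz (SG_add hi ha3S)
    · have h : z + i = (z - (a3:ℤ)) + ((i - (n:ℤ)) + (a4:ℤ)) := by rw [hnZ']; ring
      rw [h]; exact SG_add hz (SG_add hi ha4S)
end

section
/- Let S be a unitary numerical semigroup generated by {a1,a2,a3,a4}, n = a2−a1, I = (0+S)∪(n+S). Then μ_S(I)=2, μ_S(S−I)=2, and μ_S(I+(S−I))=4, where μ_S denotes the minimal number of generators of a relative ideal of S; that is, (S,I) is a perfect 2×2 brick. -/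
open Pointwise

/-- I is generated over S by the finite set G of integers. -/
def genBy (S : Set ℤ) (G : Finset ℤ) (I : Set ℤ) : Prop :=
  I = {z | ∃ g ∈ G, z - g ∈ S}

/-- The minimal number of generators of a relative ideal I of S. -/
noncomputable def mu (S I : Set ℤ) : ℕ :=
  sInf {k | ∃ G : Finset ℤ, G.card = k ∧ genBy S G I}

section aux
variable {a1 a2 a3 a4 d e u1 u4 v2 v3 : ℕ}

lemma sg_zero : (0:ℤ) ∈ SG a1 a2 a3 a4 := ⟨0,0,0,0, by push_cast; ring⟩

lemma sg_gen1 : (a1:ℤ) ∈ SG a1 a2 a3 a4 := ⟨1,0,0,0, by push_cast; ring⟩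
lemma sg_gen2 : (a2:ℤ) ∈ SG a1 a2 a3 a4 := ⟨0,1,0,0, by push_cast; ring⟩
lemma sg_gen3 : (a3:ℤ) ∈ SG a1 a2 a3 a4 := ⟨0,0,1,0, by push_cast; ring⟩
lemma sg_gen4 : (a4:ℤ) ∈ SG a1 a2 a3 a4 := ⟨0,0,0,1, by push_cast; ring⟩

lemma sg_add {x y : ℤ} (hx : x ∈ SG a1 a2 a3 a4) (hy : y ∈ SG a1 a2 a3 a4) :
    x + y ∈ SG a1 a2 a3 a4 := by
  obtain ⟨p1,p2,p3,p4,hp⟩ := hx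
  obtain ⟨q1,q2,q3,q4,hq⟩ := hy
  exact ⟨p1+q1,p2+q2,p3+q3,p4+q4, by subst hp hq; push_cast; ring⟩

lemma sg_nonneg {x : ℤ} (hx : x ∈ SG a1 a2 a3 a4) : 0 ≤ x := by
  obtain ⟨p1,p2,p3,p4,hp⟩ := hx
  subst hp; positivity

lemma sg_sub1 {z : ℤ} {t1 t2 t3 t4 : ℕ} (h : 1 ≤ t1)
    (ht : z = (t1:ℤ)*a1 + (t2:ℤ)*a2 + (t3:ℤ)*a3 + (t4:ℤ)*a4) :
    z - a1 ∈ SG a1 a2 a3 a4 :=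
  ⟨t1-1, t2, t3, t4, by rw [ht, Nat.cast_sub h]; push_cast; ring⟩

lemma sg_sub2 {z : ℤ} {t1 t2 t3 t4 : ℕ} (h : 1 ≤ t2)
    (ht : z = (t1:ℤ)*a1 + (t2:ℤ)*a2 + (t3:ℤ)*a3 + (t4:ℤ)*a4) :
    z - a2 ∈ SG a1 a2 a3 a4 :=
  ⟨t1, t2-1, t3, t4, by rw [ht, Nat.cast_sub h]; push_cast; ring⟩

lemma sg_sub3 {z : ℤ} {t1 t2 t3 t4 : ℕ} (h : 1 ≤ t3)
    (ht : z = (t1:ℤ)*a1 + (t2:ℤ)*a2 + (t3:ℤ)*a3 + (t4:ℤ)*a4) :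
    z - a3 ∈ SG a1 a2 a3 a4 :=
  ⟨t1, t2, t3-1, t4, by rw [ht, Nat.cast_sub h]; push_cast; ring⟩

lemma sg_sub4 {z : ℤ} {t1 t2 t3 t4 : ℕ} (h : 1 ≤ t4)
    (ht : z = (t1:ℤ)*a1 + (t2:ℤ)*a2 + (t3:ℤ)*a3 + (t4:ℤ)*a4) :
    z - a4 ∈ SG a1 a2 a3 a4 :=
  ⟨t1, t2, t3, t4-1, by rw [ht, Nat.cast_sub h]; push_cast; ring⟩

lemma sg_pos_ge (h12 : a1 ≤ a2) (h23 : a2 ≤ a3) (h34 : a3 ≤ a4)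
    {x : ℤ} (hx : x ∈ SG a1 a2 a3 a4) (hx0 : x ≠ 0) : (a1:ℤ) ≤ x := by
  obtain ⟨p1,p2,p3,p4,hp⟩ := hx
  subst hp
  rcases Nat.eq_zero_or_pos p1 with h|h
  · rcases Nat.eq_zero_or_pos p2 with h2|h2
    · rcases Nat.eq_zero_or_pos p3 with h3|h3
      · rcases Nat.eq_zero_or_pos p4 with h4|h4
        · simp [h,h2,h3,h4] at hx0
        · have : (1:ℤ) ≤ p4 := by exact_mod_cast h4
          nlinarith [Int.ofNat_nonneg p1, Int.ofNat_nonneg p2, Int.ofNat_nonneg p3,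
            Int.ofNat_nonneg a1, (by exact_mod_cast h12 : (a1:ℤ) ≤ a2),
            (by exact_mod_cast h23 : (a2:ℤ) ≤ a3), (by exact_mod_cast h34 : (a3:ℤ) ≤ a4)]
      · have : (1:ℤ) ≤ p3 := by exact_mod_cast h3
        nlinarith [Int.ofNat_nonneg p1, Int.ofNat_nonneg p2, Int.ofNat_nonneg p4,
          Int.ofNat_nonneg a1, (by exact_mod_cast h12 : (a1:ℤ) ≤ a2),
          (by exact_mod_cast h23 : (a2:ℤ) ≤ a3), (by exact_mod_cast h34 : (a3:ℤ) ≤ a4),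
          mul_nonneg (Int.ofNat_nonneg p4) (Int.ofNat_nonneg a4)]
    · have : (1:ℤ) ≤ p2 := by exact_mod_cast h2
      nlinarith [Int.ofNat_nonneg p1, Int.ofNat_nonneg a1,
        (by exact_mod_cast h12 : (a1:ℤ) ≤ a2),
        mul_nonneg (Int.ofNat_nonneg p3) (Int.ofNat_nonneg a3),
        mul_nonneg (Int.ofNat_nonneg p4) (Int.ofNat_nonneg a4)]
  · have : (1:ℤ) ≤ p1 := by exact_mod_cast h
    nlinarith [Int.ofNat_nonneg a1,
      mul_nonneg (Int.ofNat_nonneg p2) (Int.ofNat_nonneg a2),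
      mul_nonneg (Int.ofNat_nonneg p3) (Int.ofNat_nonneg a3),
      mul_nonneg (Int.ofNat_nonneg p4) (Int.ofNat_nonneg a4)]

lemma coeff_lb {p : ℕ} (hp : 1 ≤ p) (a : ℕ) : (a:ℤ) ≤ p * a := by
  have : (1:ℤ) ≤ p := by exact_mod_cast hp
  nlinarith [Int.ofNat_nonneg a]

lemma term_nn (p a : ℕ) : (0:ℤ) ≤ (p:ℤ) * a :=
  mul_nonneg (Int.ofNat_nonneg p) (Int.ofNat_nonneg a)

lemma sg_small (h23 : a2 ≤ a3) (h34 : a3 ≤ a4) {x : ℤ} (hx : x ∈ SG a1 a2 a3 a4)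
    (h : x < a2) : ∃ t : ℕ, x = t * a1 := by
  obtain ⟨p1,p2,p3,p4,hp⟩ := hx
  have h23' : (a2:ℤ) ≤ a3 := by exact_mod_cast h23
  have h34' : (a3:ℤ) ≤ a4 := by exact_mod_cast h34
  have h2 : p2 = 0 := by
    by_contra hc
    have := coeff_lb (Nat.one_le_iff_ne_zero.mpr hc) a2
    nlinarith [term_nn p1 a1, term_nn p3 a3, term_nn p4 a4]
  have h3 : p3 = 0 := by
    by_contra hc
    have := coeff_lb (Nat.one_le_iff_ne_zero.mpr hc) a3
    nlinarith [term_nn p1 a1, term_nn p2 a2, term_nn p4 a4]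
  have h4 : p4 = 0 := by
    by_contra hc
    have := coeff_lb (Nat.one_le_iff_ne_zero.mpr hc) a4
    nlinarith [term_nn p1 a1, term_nn p2 a2, term_nn p3 a3]
  subst h2 h3 h4
  exact ⟨p1, by simpa using hp⟩

lemma sg_mid (h34 : a3 ≤ a4) {x : ℤ} (hx : x ∈ SG a1 a2 a3 a4)
    (h : x < a3) : ∃ p q : ℕ, x = p * a1 + q * a2 := by
  obtain ⟨p1,p2,p3,p4,hp⟩ := hx
  have h34' : (a3:ℤ) ≤ a4 := by exact_mod_cast h34
  have h3 : p3 = 0 := by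
    by_contra hc
    have := coeff_lb (Nat.one_le_iff_ne_zero.mpr hc) a3
    nlinarith [term_nn p1 a1, term_nn p2 a2, term_nn p4 a4]
  have h4 : p4 = 0 := by
    by_contra hc
    have := coeff_lb (Nat.one_le_iff_ne_zero.mpr hc) a4
    nlinarith [term_nn p1 a1, term_nn p2 a2, term_nn p3 a3]
  subst h3 h4
  exact ⟨p1, p2, by simpa using hp⟩

lemma sg_mid4 {x : ℤ} (hx : x ∈ SG a1 a2 a3 a4)
    (h : x < a4) : ∃ p q r : ℕ, x = p * a1 + q * a2 + r * a3 := by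
  obtain ⟨p1,p2,p3,p4,hp⟩ := hx
  have h4 : p4 = 0 := by
    by_contra hc
    have := coeff_lb (Nat.one_le_iff_ne_zero.mpr hc) a4
    nlinarith [term_nn p1 a1, term_nn p2 a2, term_nn p3 a3]
  subst h4
  exact ⟨p1, p2, p3, by simpa using hp⟩

lemma setup (h1 : 0 < a1) (h12 : a1 < a2) (h23 : a2 < a3) (h34 : a3 < a4)
    (hgcd : Nat.gcd (Nat.gcd a1 a2) (Nat.gcd a3 a4) = 1)
    (hd14 : ¬ a1 ∣ a4)
    (hsum : a1 + a4 = a2 + a3)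
    (hu : a1 + a4 = Nat.gcd a1 a4 * Nat.gcd a2 a3) :
    ∃ d e u1 u4 v2 v3 : ℕ,
      a1 = d*u1 ∧ a2 = e*v2 ∧ a3 = e*v3 ∧ a4 = d*u4 ∧
      u1 + u4 = e ∧ v2 + v3 = d ∧
      Nat.Coprime d e ∧ Nat.Coprime u1 e ∧
      2 ≤ u1 ∧ u1 < u4 ∧ 1 ≤ v2 ∧ v2 < v3 := by
  set d := Nat.gcd a1 a4 with hd
  set e := Nat.gcd a2 a3 with he
  have h4 : 0 < a4 := by omega
  have h2 : 0 < a2 := by omega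
  have hdpos : 0 < d := Nat.gcd_pos_of_pos_left _ h1
  have hepos : 0 < e := Nat.gcd_pos_of_pos_left _ h2
  obtain ⟨u1, hu1⟩ : d ∣ a1 := Nat.gcd_dvd_left _ _
  obtain ⟨u4, hu4⟩ : d ∣ a4 := Nat.gcd_dvd_right _ _
  obtain ⟨v2, hv2⟩ : e ∣ a2 := Nat.gcd_dvd_left _ _
  obtain ⟨v3, hv3⟩ : e ∣ a3 := Nat.gcd_dvd_right _ _
  have hd1 : d ∣ a1 := ⟨u1, hu1⟩
  have hd4 : d ∣ a4 := ⟨u4, hu4⟩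
  have he2 : e ∣ a2 := ⟨v2, hv2⟩
  have he3 : e ∣ a3 := ⟨v3, hv3⟩
  have hsum1 : u1 + u4 = e := by
    have : d * (u1 + u4) = d * e := by rw [Nat.mul_add, ← hu1, ← hu4, hu]
    exact Nat.eq_of_mul_eq_mul_left hdpos this
  have hsum2 : v2 + v3 = d := by
    have : e * (v2 + v3) = e * d := by
      rw [Nat.mul_add, ← hv2, ← hv3, ← hsum, hu, Nat.mul_comm]
    exact Nat.eq_of_mul_eq_mul_left hepos this
  have hcopuv : Nat.Coprime u1 u4 := by
    have h : d * Nat.gcd u1 u4 = d * 1 := by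
      rw [← Nat.gcd_mul_left, ← hu1, ← hu4, Nat.mul_one]
    exact Nat.eq_of_mul_eq_mul_left hdpos h
  have hcopde : Nat.Coprime d e := by
    have hdvd : Nat.gcd d e ∣ 1 := by
      rw [← hgcd]
      exact Nat.dvd_gcd
        (Nat.dvd_gcd ((Nat.gcd_dvd_left d e).trans hd1) ((Nat.gcd_dvd_right d e).trans he2))
        (Nat.dvd_gcd ((Nat.gcd_dvd_right d e).trans he3) ((Nat.gcd_dvd_left d e).trans hd4))
    exact Nat.eq_one_of_dvd_one hdvd
  have hcopu1e : Nat.Coprime u1 e := by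
    rw [← hsum1]
    simpa [Nat.coprime_add_self_left] using hcopuv
  have hu1pos : 0 < u1 := by
    rcases Nat.eq_zero_or_pos u1 with h|h
    · simp [h] at hu1; omega
    · exact h
  have hu1lt : u1 < u4 := by
    have : d * u1 < d * u4 := by rw [← hu1, ← hu4]; omega
    exact Nat.lt_of_mul_lt_mul_left this
  have hu1ge2 : 2 ≤ u1 := by
    by_contra hcon
    have : u1 = 1 := by omega
    subst this
    exact hd14 (by rw [hu1, hu4]; exact ⟨u4, by ring⟩)
  have hv2pos : 1 ≤ v2 := by
    rcases Nat.eq_zero_or_pos v2 with h|h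
    · simp [h] at hv2; omega
    · exact h
  have hv2lt : v2 < v3 := by
    have : e * v2 < e * v3 := by rw [← hv2, ← hv3]; omega
    exact Nat.lt_of_mul_lt_mul_left this
  exact ⟨d, e, u1, u4, v2, v3, hu1, hv2, hv3, hu4, hsum1, hsum2, hcopde, hcopu1e,
    hu1ge2, hu1lt, hv2pos, hv2lt⟩

/-- Core lemma: z ∈ S and z + n ∈ S imply z - a1 ∈ S or z - a3 ∈ S. -/
lemma lemK (E1 : a1 = d*u1) (E2 : a2 = e*v2) (E3 : a3 = e*v3) (E4 : a4 = d*u4)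
    (hsum1 : u1 + u4 = e) (hcopde : Nat.Coprime d e) (hcopu1e : Nat.Coprime u1 e)
    (hu1ge : 1 ≤ u1) (hu1lt : u1 < u4) (hsumZ : a1 + a4 = a2 + a3)
    {z : ℤ} (hz : z ∈ SG a1 a2 a3 a4) (hzn : z + ((a2:ℤ) - a1) ∈ SG a1 a2 a3 a4) :
    z - a1 ∈ SG a1 a2 a3 a4 ∨ z - a3 ∈ SG a1 a2 a3 a4 := by
  by_contra hcon
  push_neg at hcon
  obtain ⟨hA, hC⟩ := hcon
  obtain ⟨t1,t2,t3,t4,ht⟩ := hz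
  obtain ⟨s1,s2,s3,s4,hs⟩ := hzn
  have e1 : (a1:ℤ) = (d:ℤ)*u1 := by exact_mod_cast congrArg (Nat.cast : ℕ → ℤ) E1
  have e2 : (a2:ℤ) = (e:ℤ)*v2 := by exact_mod_cast congrArg (Nat.cast : ℕ → ℤ) E2
  have e3 : (a3:ℤ) = (e:ℤ)*v3 := by exact_mod_cast congrArg (Nat.cast : ℕ → ℤ) E3
  have e4 : (a4:ℤ) = (d:ℤ)*u4 := by exact_mod_cast congrArg (Nat.cast : ℕ → ℤ) E4
  have key : (u4:ℤ)*a1 = (u1:ℤ)*a4 := by rw [e1, e4]; ring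
  have hsZ : (a1:ℤ) + a4 = a2 + a3 := by exact_mod_cast congrArg (Nat.cast : ℕ → ℤ) hsumZ
  have hu4ge1 : 1 ≤ u4 := by omega
  have ht1 : t1 = 0 := by
    by_contra hc
    have h1le : 1 ≤ t1 := Nat.one_le_iff_ne_zero.mpr hc
    exact hA ⟨t1-1, t2, t3, t4, by rw [ht, Nat.cast_sub h1le]; push_cast; ring⟩
  subst ht1
  have ht4 : t4 < u1 := by
    by_contra hc
    push_neg at hc
    refine hA ⟨u4-1, t2, t3, t4-u1, ?_⟩
    rw [ht, Nat.cast_sub hu4ge1, Nat.cast_sub hc]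
    push_cast
    linear_combination -key
  have hs4 : s4 = 0 := by
    by_contra hc
    have h1le : 1 ≤ s4 := Nat.one_le_iff_ne_zero.mpr hc
    refine hC ⟨s1, s2, s3, s4-1, ?_⟩
    rw [Nat.cast_sub h1le]
    push_cast
    linear_combination hs + hsZ
  subst hs4
  have hs1 : s1 < u4 := by
    by_contra hc
    push_neg at hc
    refine hC ⟨s1-u4, s2, s3, u1-1, ?_⟩
    rw [Nat.cast_sub hu1ge, Nat.cast_sub hc]
    push_cast
    linear_combination hs + hsZ + key
  have Ra : (a2:ℤ) - a1 = s1*a1 + s2*a2 + s3*a3 - t2*a2 - t3*a3 - t4*a4 := by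
    push_cast at hs ht ⊢
    linear_combination hs - ht
  have G : (d:ℤ)*((t4:ℤ)*u4 - ((s1:ℤ)+1)*u1)
      = (e:ℤ)*((s2:ℤ)*v2 + (s3:ℤ)*v3 - (t2:ℤ)*v2 - (t3:ℤ)*v3 - v2) := by
    linear_combination Ra + ((1:ℤ)+s1)*e1 + ((s2:ℤ) - t2 - 1)*e2 + ((s3:ℤ) - t3)*e3 - (t4:ℤ)*e4
  have copED : IsCoprime (e:ℤ) (d:ℤ) := (Nat.isCoprime_iff_coprime.mpr hcopde).symm
  have copEU : IsCoprime (e:ℤ) (u1:ℤ) := (Nat.isCoprime_iff_coprime.mpr hcopu1e).symm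
  have hdvd1 : (e:ℤ) ∣ (d:ℤ) * ((t4:ℤ)*u4 - ((s1:ℤ)+1)*u1) := Dvd.intro _ G.symm
  have hdvd2 : (e:ℤ) ∣ ((t4:ℤ)*u4 - ((s1:ℤ)+1)*u1) := copED.dvd_of_dvd_mul_left hdvd1
  have hsum1Z : (u1:ℤ) + u4 = e := by exact_mod_cast congrArg (Nat.cast : ℕ → ℤ) hsum1
  have hdvd3 : (e:ℤ) ∣ ((t4:ℤ)+s1+1) * u1 := by
    have h5 : ((t4:ℤ)+s1+1)*u1 = (t4:ℤ)*e - ((t4:ℤ)*u4 - ((s1:ℤ)+1)*u1) := by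
      linear_combination (t4:ℤ) * hsum1Z
    rw [h5]
    exact dvd_sub (Dvd.intro_left _ rfl) hdvd2
  have hdvd4 : (e:ℤ) ∣ ((t4:ℤ)+s1+1) := copEU.dvd_of_dvd_mul_right hdvd3
  have hdvd5 : e ∣ (t4+s1+1) := by
    have h6 : ((t4+s1+1 : ℕ) : ℤ) = (t4:ℤ)+s1+1 := by push_cast; ring
    exact_mod_cast (h6 ▸ hdvd4 : (e:ℤ) ∣ ((t4+s1+1:ℕ):ℤ))
  have : e ≤ t4+s1+1 := Nat.le_of_dvd (by omega) hdvd5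
  omega

lemma notin_a3 (E1 : a1 = d*u1) (E2 : a2 = e*v2) (E3 : a3 = e*v3)
    (hcopde : Nat.Coprime d e) (hcopu1e : Nat.Coprime u1 e)
    (hu1ge : 2 ≤ u1) (hd23 : ¬ a2 ∣ a3) (h2 : 0 < a2) (h3lt : a3 < d*e)
    (p q : ℕ) : (a3:ℤ) ≠ p*a1 + q*a2 := by
  intro heq
  have e1 : (a1:ℤ) = (d:ℤ)*u1 := by exact_mod_cast congrArg (Nat.cast : ℕ → ℤ) E1
  have e2 : (a2:ℤ) = (e:ℤ)*v2 := by exact_mod_cast congrArg (Nat.cast : ℕ → ℤ) E2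
  have e3 : (a3:ℤ) = (e:ℤ)*v3 := by exact_mod_cast congrArg (Nat.cast : ℕ → ℤ) E3
  have copED : IsCoprime (e:ℤ) (d:ℤ) := (Nat.isCoprime_iff_coprime.mpr hcopde).symm
  have copEU : IsCoprime (e:ℤ) (u1:ℤ) := (Nat.isCoprime_iff_coprime.mpr hcopu1e).symm
  have hdvd1 : (e:ℤ) ∣ (p:ℤ) * d * u1 := by
    refine ⟨(v3:ℤ) - q*v2, ?_⟩
    linear_combination -heq - (p:ℤ)*e1 - (q:ℤ)*e2 + e3
  have hdvd2 : (e:ℤ) ∣ (p:ℤ) * u1 :=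
    copED.dvd_of_dvd_mul_right (by rwa [mul_assoc, mul_comm ((d:ℤ)) _, ← mul_assoc] at hdvd1)
  have hdvd3 : (e:ℤ) ∣ (p:ℤ) := copEU.dvd_of_dvd_mul_right hdvd2
  have hdvdn : e ∣ p := by exact_mod_cast hdvd3
  have hdepos : 0 < d*e := by omega
  have hdpos : 0 < d := Nat.pos_of_ne_zero (fun h => by subst h; simp at hdepos)
  have hepos : 0 < e := Nat.pos_of_ne_zero (fun h => by subst h; simp at hdepos)
  rcases Nat.eq_zero_or_pos p with hp | hp
  · subst hp
    apply hd23
    push_cast at heq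
    have h' : a3 = q*a2 := by exact_mod_cast (by linarith : (a3:ℤ) = ((q:ℤ)*a2))
    exact ⟨q, by rw [h', Nat.mul_comm]⟩
  · have hep : e ≤ p := Nat.le_of_dvd hp hdvdn
    have hplarge : (e:ℤ) ≤ p := by exact_mod_cast hep
    have h2u : (2:ℤ) ≤ u1 := by exact_mod_cast hu1ge
    have h3lt' : (a3:ℤ) < d*e := by exact_mod_cast h3lt
    have hqnn : (0:ℤ) ≤ (q:ℤ)*a2 := mul_nonneg (Int.ofNat_nonneg q) (Int.ofNat_nonneg a2)
    have hdZ : (0:ℤ) < d := by exact_mod_cast hdpos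
    have heZ : (0:ℤ) < e := by exact_mod_cast hepos
    have step1 : (e:ℤ)*a1 ≤ p*a1 := mul_le_mul_of_nonneg_right hplarge (Int.ofNat_nonneg a1)
    have step2 : (e:ℤ)*a1 = (d:ℤ)*e*u1 := by rw [e1]; ring
    have step3 : (d:ℤ)*e*2 ≤ (d:ℤ)*e*u1 :=
      mul_le_mul_of_nonneg_left h2u (by positivity)
    linarith

lemma notin_a4 (E1 : a1 = d*u1) (E2 : a2 = e*v2) (E3 : a3 = e*v3) (E4 : a4 = d*u4)
    (hcopde : Nat.Coprime d e) (hv2ge : 1 ≤ v2) (hv3ge : 1 ≤ v3)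
    (hd14 : ¬ a1 ∣ a4) (h4 : 0 < a4) (h4lt : a4 < d*e)
    (p q r : ℕ) : (a4:ℤ) ≠ p*a1 + q*a2 + r*a3 := by
  intro heq
  have e1 : (a1:ℤ) = (d:ℤ)*u1 := by exact_mod_cast congrArg (Nat.cast : ℕ → ℤ) E1
  have e2 : (a2:ℤ) = (e:ℤ)*v2 := by exact_mod_cast congrArg (Nat.cast : ℕ → ℤ) E2
  have e3 : (a3:ℤ) = (e:ℤ)*v3 := by exact_mod_cast congrArg (Nat.cast : ℕ → ℤ) E3
  have e4 : (a4:ℤ) = (d:ℤ)*u4 := by exact_mod_cast congrArg (Nat.cast : ℕ → ℤ) E4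
  have copDE : IsCoprime (d:ℤ) (e:ℤ) := Nat.isCoprime_iff_coprime.mpr hcopde
  have hew : (e:ℤ) * ((q*v2+r*v3 : ℕ):ℤ) = (a4:ℤ) - p*a1 := by
    push_cast
    linear_combination -heq - (q:ℤ)*e2 - (r:ℤ)*e3
  have hdvd1 : (d:ℤ) ∣ (e:ℤ) * ((q*v2+r*v3 : ℕ):ℤ) := by
    refine ⟨(u4:ℤ) - p*u1, ?_⟩
    rw [hew]; linear_combination e4 - (p:ℤ)*e1
  have hdvd2 : (d:ℤ) ∣ ((q*v2+r*v3 : ℕ):ℤ) := copDE.dvd_of_dvd_mul_left hdvd1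
  have hdvdn : d ∣ q*v2+r*v3 := by exact_mod_cast hdvd2
  have hdepos : 0 < d*e := by omega
  have hdpos : 0 < d := Nat.pos_of_ne_zero (fun h => by subst h; simp at hdepos)
  have hepos : 0 < e := Nat.pos_of_ne_zero (fun h => by subst h; simp at hdepos)
  have hwlt : q*v2+r*v3 < d := by
    have hlt : (e:ℤ) * ((q*v2+r*v3 : ℕ):ℤ) < (e:ℤ) * d := by
      have h4lt' : (a4:ℤ) < d*e := by exact_mod_cast h4lt
      have hpnn : (0:ℤ) ≤ (p:ℤ)*a1 := mul_nonneg (Int.ofNat_nonneg p) (Int.ofNat_nonneg a1)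
      rw [hew]; linarith [h4lt']
    have heZ : (0:ℤ) ≤ e := Int.ofNat_nonneg e
    have := lt_of_mul_lt_mul_left hlt heZ
    exact_mod_cast this
  have hw0 : q*v2+r*v3 = 0 := by
    rcases Nat.eq_zero_or_pos (q*v2+r*v3) with h|h
    · exact h
    · exact absurd (Nat.le_of_dvd h hdvdn) (by omega)
  have hq : q = 0 := by
    rcases Nat.mul_eq_zero.mp (by omega : q * v2 = 0) with h|h
    · exact h
    · omega
  have hr : r = 0 := by
    rcases Nat.mul_eq_zero.mp (by omega : r * v3 = 0) with h|h
    · exact h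
    · omega
  subst hq hr
  apply hd14
  push_cast at heq
  have h' : a4 = p*a1 := by exact_mod_cast (by linarith : (a4:ℤ) = ((p:ℤ)*a1))
  exact ⟨p, by rw [h', Nat.mul_comm]⟩

end aux

lemma mu_eq_two {S J : Set ℤ} {g0 g1 : ℤ} (hne : g0 ≠ g1)
    (hgen : genBy S ({g0, g1} : Finset ℤ) J) (hJ : J.Nonempty)
    (h1 : ∀ g : ℤ, ¬ genBy S ({g} : Finset ℤ) J) : mu S J = 2 := by
  have h2mem : 2 ∈ {k | ∃ G : Finset ℤ, G.card = k ∧ genBy S G J} :=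
    ⟨{g0, g1}, Finset.card_pair hne, hgen⟩
  have hle : mu S J ≤ 2 := Nat.sInf_le h2mem
  have hmem : mu S J ∈ {k | ∃ G : Finset ℤ, G.card = k ∧ genBy S G J} :=
    Nat.sInf_mem ⟨2, h2mem⟩
  obtain ⟨G, hcard, hgenG⟩ := hmem
  rcases (by omega : mu S J = 0 ∨ mu S J = 1 ∨ mu S J = 2) with h|h|h
  · exfalso
    rw [h] at hcard
    rw [Finset.card_eq_zero] at hcard
    subst hcard
    obtain ⟨x, hx⟩ := hJ
    rw [hgenG] at hx
    simp at hx
  · exfalso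
    rw [h] at hcard
    obtain ⟨g, rfl⟩ := Finset.card_eq_one.mp hcard
    exact h1 g hgenG
  · exact h

lemma mu_eq_four {S J : Set ℤ} {b1 b2 b3 b4 : ℤ}
    (hcard : ({b1, b2, b3, b4} : Finset ℤ).card = 4)
    (hgen : genBy S ({b1, b2, b3, b4} : Finset ℤ) J)
    (hmin : ∀ G : Finset ℤ, genBy S G J → b1 ∈ G ∧ b2 ∈ G ∧ b3 ∈ G ∧ b4 ∈ G) :
    mu S J = 4 := by
  have h4mem : 4 ∈ {k | ∃ G : Finset ℤ, G.card = k ∧ genBy S G J} :=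
    ⟨_, hcard, hgen⟩
  refine le_antisymm (Nat.sInf_le h4mem) (le_csInf ⟨4, h4mem⟩ ?_)
  rintro k ⟨G, hc, hg⟩
  obtain ⟨m1, m2, m3, m4⟩ := hmin G hg
  have hsub : ({b1, b2, b3, b4} : Finset ℤ) ⊆ G := by
    intro x hx
    simp only [Finset.mem_insert, Finset.mem_singleton] at hx
    rcases hx with rfl|rfl|rfl|rfl <;> assumption
  calc 4 = ({b1, b2, b3, b4} : Finset ℤ).card := hcard.symm
    _ ≤ G.card := Finset.card_le_card hsub
    _ = k := hc

set_option maxHeartbeats 1000000 in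
theorem stmt_15 (a1 a2 a3 a4 : ℕ)
(h1 : 0 < a1) (h12 : a1 < a2) (h23 : a2 < a3) (h34 : a3 < a4)
    (hgcd : Nat.gcd (Nat.gcd a1 a2) (Nat.gcd a3 a4) = 1)
    (hd12 : ¬ a1 ∣ a2) (hd13 : ¬ a1 ∣ a3) (hd14 : ¬ a1 ∣ a4)
    (hd23 : ¬ a2 ∣ a3) (hd24 : ¬ a2 ∣ a4) (hd34 : ¬ a3 ∣ a4)
    (hsum : a1 + a4 = a2 + a3)
    (hu : a1 + a4 = Nat.gcd a1 a4 * Nat.gcd a2 a3)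
    (n : ℕ) (hn : n = a2 - a1)
    (I : Set ℤ) (hI : I = {z | z ∈ SG a1 a2 a3 a4 ∨ z - n ∈ SG a1 a2 a3 a4}) :
    mu (SG a1 a2 a3 a4) I = 2 ∧
    mu (SG a1 a2 a3 a4) (dual (SG a1 a2 a3 a4) I) = 2 ∧
    mu (SG a1 a2 a3 a4) (I + dual (SG a1 a2 a3 a4) I) = 4 ∧
    I + dual (SG a1 a2 a3 a4) I = SG a1 a2 a3 a4 \ {0} := by
  obtain ⟨d, e, u1, u4, v2, v3, E1, E2, E3, E4, hsum1, hsum2, hcopde, hcopu1e,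
    hu1ge2, hu1lt, hv2ge, hv2lt⟩ := setup h1 h12 h23 h34 hgcd hd14 hsum hu
  have hnZ : (n:ℤ) = (a2:ℤ) - a1 := by rw [hn, Nat.cast_sub h12.le]
  have hsZ : (a1:ℤ) + a4 = a2 + a3 := by exact_mod_cast congrArg (Nat.cast : ℕ → ℤ) hsum
  have hde : d*e = a1 + a4 := by rw [E1, E4, ← Nat.mul_add, hsum1]
  have h3lt : a3 < d*e := by omega
  have h4lt : a4 < d*e := by omega
  have hv3ge : 1 ≤ v3 := by omega
  have hnpos : 0 < n := by omega
  -- n ∉ S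
  have hnS : (n:ℤ) ∉ SG a1 a2 a3 a4 := by
    intro h
    obtain ⟨t, ht⟩ := sg_small h23.le h34.le h (by exact_mod_cast (by omega : n < a2))
    have htn : n = t * a1 := by exact_mod_cast ht
    have h2' : a2 = t*a1 + a1 := by omega
    exact hd12 ⟨t+1, by rw [h2']; ring⟩
  -- a3 - a1 ∉ S
  have hna31 : (a3:ℤ) - a1 ∉ SG a1 a2 a3 a4 := by
    intro h
    obtain ⟨p, q, hpq⟩ := sg_mid h34.le h (by omega)
    exact notin_a3 E1 E2 E3 hcopde hcopu1e hu1ge2 hd23 (by omega) h3lt (p+1) q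
      (by push_cast; linarith)
  -- basic membership in I
  have hI0 : (0:ℤ) ∈ I := by rw [hI]; exact Or.inl sg_zero
  have hIn : (n:ℤ) ∈ I := by rw [hI]; right; simpa using sg_zero
  -- characterization of the dual
  have hdual : dual (SG a1 a2 a3 a4) I
      = {z : ℤ | z - (a1:ℤ) ∈ SG a1 a2 a3 a4 ∨ z - (a3:ℤ) ∈ SG a1 a2 a3 a4} := by
    ext z
    constructor
    · intro hz
      have hz0 : z ∈ SG a1 a2 a3 a4 := by have := hz 0 hI0; simpa using this
      have hzn : z + n ∈ SG a1 a2 a3 a4 := hz n hIn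
      exact lemK E1 E2 E3 E4 hsum1 hcopde hcopu1e (by omega) hu1lt hsum hz0
        (by rw [← hnZ]; exact hzn)
    · intro hz i hi
      rw [hI] at hi
      rcases hz with h|h <;> rcases hi with hi|hi
      · have heq : z + i = z - ↑a1 + i + ↑a1 := by ring
        rw [heq]; exact sg_add (sg_add h hi) sg_gen1
      · have heq : z + i = z - ↑a1 + (i - ↑n) + ↑a2 := by rw [hnZ]; ring
        rw [heq]; exact sg_add (sg_add h hi) sg_gen2
      · have heq : z + i = z - ↑a3 + i + ↑a3 := by ring
        rw [heq]; exact sg_add (sg_add h hi) sg_gen3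
      · have heq : z + i = z - ↑a3 + (i - ↑n) + ↑a4 := by rw [hnZ]; linear_combination - hsZ
        rw [heq]; exact sg_add (sg_add h hi) sg_gen4
  -- the sum ideal equals the maximal ideal
  have hM : I + dual (SG a1 a2 a3 a4) I = SG a1 a2 a3 a4 \ {0} := by
    ext z
    rw [Set.mem_add]
    constructor
    · rintro ⟨i, hi, w, hw, rfl⟩
      rw [hI] at hi
      rw [hdual] at hw
      constructor
      · rcases hi with hi|hi <;> rcases hw with hw|hw
        · have heq : i + w = i + (w - ↑a1) + ↑a1 := by ring
          rw [heq]; exact sg_add (sg_add hi hw) sg_gen1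
        · have heq : i + w = i + (w - ↑a3) + ↑a3 := by ring
          rw [heq]; exact sg_add (sg_add hi hw) sg_gen3
        · have heq : i + w = (i - ↑n) + (w - ↑a1) + ↑a2 := by rw [hnZ]; ring
          rw [heq]; exact sg_add (sg_add hi hw) sg_gen2
        · have heq : i + w = (i - ↑n) + (w - ↑a3) + ↑a4 := by
            rw [hnZ]; linear_combination - hsZ
          rw [heq]; exact sg_add (sg_add hi hw) sg_gen4
      · simp only [Set.mem_singleton_iff]
        have hiP : 0 ≤ i := by
          rcases hi with hi|hi
          · exact sg_nonneg hi
          · have := sg_nonneg hi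
            have hnn : (0:ℤ) ≤ n := Int.ofNat_nonneg n
            linarith
        have hwP : 0 < w := by
          rcases hw with hw|hw
          · have := sg_nonneg hw
            have : (0:ℤ) < a1 := by exact_mod_cast h1
            omega
          · have := sg_nonneg hw
            have : (0:ℤ) < a3 := by exact_mod_cast (show 0 < a3 by omega)
            omega
        intro h0
        linarith
    · rintro ⟨hzS, hz0⟩
      simp only [Set.mem_singleton_iff] at hz0
      obtain ⟨t1,t2,t3,t4,ht⟩ := hzS
      by_cases ht1 : 1 ≤ t1
      · exact ⟨0, hI0, z, by rw [hdual]; exact Or.inl (sg_sub1 ht1 ht), by ring⟩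
      by_cases ht3 : 1 ≤ t3
      · exact ⟨0, hI0, z, by rw [hdual]; exact Or.inr (sg_sub3 ht3 ht), by ring⟩
      by_cases ht2 : 1 ≤ t2
      · refine ⟨n, hIn, z - n, ?_, by ring⟩
        rw [hdual]; left
        have heq : z - ↑n - ↑a1 = z - ↑a2 := by rw [hnZ]; ring
        rw [heq]; exact sg_sub2 ht2 ht
      by_cases ht4 : 1 ≤ t4
      · refine ⟨n, hIn, z - n, ?_, by ring⟩
        rw [hdual]; right
        have heq : z - ↑n - ↑a3 = z - ↑a4 := by rw [hnZ]; linear_combination hsZ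
        rw [heq]; exact sg_sub4 ht4 ht
      · exfalso
        apply hz0
        rw [ht]
        simp [show t1 = 0 by omega, show t2 = 0 by omega,
          show t3 = 0 by omega, show t4 = 0 by omega]
  -- mu I = 2
  have hgenI : genBy (SG a1 a2 a3 a4) ({0, (n:ℤ)} : Finset ℤ) I := by
    rw [genBy, hI]
    ext z
    simp only [Set.mem_setOf_eq, Finset.mem_insert, Finset.mem_singleton]
    constructor
    · rintro (h|h)
      · exact ⟨0, Or.inl rfl, by simpa using h⟩
      · exact ⟨n, Or.inr rfl, h⟩
    · rintro ⟨g, (rfl|rfl), hg⟩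
      · left; simpa using hg
      · right; exact hg
  have hmuI : mu (SG a1 a2 a3 a4) I = 2 := by
    refine mu_eq_two (show (0:ℤ) ≠ (n:ℤ) by
      intro h; exact absurd (by exact_mod_cast h : (0:ℕ) = n) (by omega)) hgenI ⟨0, hI0⟩ ?_
    intro g hg
    rw [genBy] at hg
    have h0mem := hI0
    rw [hg] at h0mem
    simp only [Set.mem_setOf_eq, Finset.mem_singleton, exists_eq_left] at h0mem
    have hgneg : 0 ≤ -g := by have := sg_nonneg h0mem; linarith
    have hgI : g ∈ I := by
      rw [hg]
      exact ⟨g, Finset.mem_singleton_self g, by simpa using (sg_zero (a1:=a1) (a2:=a2) (a3:=a3) (a4:=a4))⟩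
    rw [hI] at hgI
    have hg0 : g = 0 := by
      rcases hgI with h|h
      · have := sg_nonneg h; linarith
      · have := sg_nonneg h
        have hnn : (0:ℤ) < n := by exact_mod_cast hnpos
        linarith
    subst hg0
    have hnmem := hIn
    rw [hg] at hnmem
    simp only [Set.mem_setOf_eq, Finset.mem_singleton, exists_eq_left, sub_zero] at hnmem
    exact hnS hnmem
  -- mu dual = 2
  have hgenD : genBy (SG a1 a2 a3 a4) ({(a1:ℤ), (a3:ℤ)} : Finset ℤ)
      (dual (SG a1 a2 a3 a4) I) := by
    rw [genBy, hdual]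
    ext z
    simp only [Set.mem_setOf_eq, Finset.mem_insert, Finset.mem_singleton]
    constructor
    · rintro (h|h)
      · exact ⟨a1, Or.inl rfl, h⟩
      · exact ⟨a3, Or.inr rfl, h⟩
    · rintro ⟨g, (rfl|rfl), hg⟩
      · exact Or.inl hg
      · exact Or.inr hg
  have ha1D : (a1:ℤ) ∈ dual (SG a1 a2 a3 a4) I := by
    rw [hdual]; left; simpa using (sg_zero (a1:=a1) (a2:=a2) (a3:=a3) (a4:=a4))
  have ha3D : (a3:ℤ) ∈ dual (SG a1 a2 a3 a4) I := by
    rw [hdual]; right; simpa using (sg_zero (a1:=a1) (a2:=a2) (a3:=a3) (a4:=a4))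
  have hmuD : mu (SG a1 a2 a3 a4) (dual (SG a1 a2 a3 a4) I) = 2 := by
    refine mu_eq_two (show ((a1:ℤ)) ≠ (a3:ℤ) by
      intro h; exact absurd (by exact_mod_cast h : a1 = a3) (by omega)) hgenD ⟨a1, ha1D⟩ ?_
    intro g hg
    rw [genBy] at hg
    have h1mem := ha1D
    rw [hg] at h1mem
    simp only [Set.mem_setOf_eq, Finset.mem_singleton, exists_eq_left] at h1mem
    have hgD : g ∈ dual (SG a1 a2 a3 a4) I := by
      rw [hg]
      exact ⟨g, Finset.mem_singleton_self g, by simpa using (sg_zero (a1:=a1) (a2:=a2) (a3:=a3) (a4:=a4))⟩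
    rw [hdual] at hgD
    have hga1 : 0 ≤ (a1:ℤ) - g := sg_nonneg h1mem
    rcases hgD with h|h
    · have hga2 : 0 ≤ g - a1 := sg_nonneg h
      have hgeq : g = (a1:ℤ) := by linarith
      subst hgeq
      have h3mem := ha3D
      rw [hg] at h3mem
      simp only [Set.mem_setOf_eq, Finset.mem_singleton, exists_eq_left] at h3mem
      exact hna31 h3mem
    · have hga3 : 0 ≤ g - a3 := sg_nonneg h
      have : (a1:ℤ) < a3 := by exact_mod_cast (by omega : a1 < a3)
      linarith
  -- mu of maximal ideal = 4
  have hgenM : genBy (SG a1 a2 a3 a4) ({(a1:ℤ),(a2:ℤ),(a3:ℤ),(a4:ℤ)} : Finset ℤ)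
      (SG a1 a2 a3 a4 \ {0}) := by
    rw [genBy]
    ext z
    simp only [Set.mem_diff, Set.mem_singleton_iff, Set.mem_setOf_eq, Finset.mem_insert,
      Finset.mem_singleton]
    constructor
    · rintro ⟨hzS, hz0⟩
      obtain ⟨t1,t2,t3,t4,ht⟩ := hzS
      by_cases h1' : 1 ≤ t1
      · exact ⟨a1, by tauto, sg_sub1 h1' ht⟩
      by_cases h2' : 1 ≤ t2
      · exact ⟨a2, by tauto, sg_sub2 h2' ht⟩
      by_cases h3' : 1 ≤ t3
      · exact ⟨a3, by tauto, sg_sub3 h3' ht⟩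
      by_cases h4' : 1 ≤ t4
      · exact ⟨a4, by tauto, sg_sub4 h4' ht⟩
      · exfalso
        apply hz0
        rw [ht]
        simp [show t1 = 0 by omega, show t2 = 0 by omega,
          show t3 = 0 by omega, show t4 = 0 by omega]
    · rintro ⟨g, hgmem, hgS⟩
      have hnn := sg_nonneg hgS
      rcases hgmem with rfl|rfl|rfl|rfl
      · refine ⟨?_, ?_⟩
        · have heq : z = (z - ↑a1) + ↑a1 := by ring
          rw [heq]; exact sg_add hgS sg_gen1
        · intro h0; rw [h0] at hnn; omega
      · refine ⟨?_, ?_⟩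
        · have heq : z = (z - ↑a2) + ↑a2 := by ring
          rw [heq]; exact sg_add hgS sg_gen2
        · intro h0; rw [h0] at hnn; omega
      · refine ⟨?_, ?_⟩
        · have heq : z = (z - ↑a3) + ↑a3 := by ring
          rw [heq]; exact sg_add hgS sg_gen3
        · intro h0; rw [h0] at hnn; omega
      · refine ⟨?_, ?_⟩
        · have heq : z = (z - ↑a4) + ↑a4 := by ring
          rw [heq]; exact sg_add hgS sg_gen4
        · intro h0; rw [h0] at hnn; omega
  have hcard4 : ({(a1:ℤ),(a2:ℤ),(a3:ℤ),(a4:ℤ)} : Finset ℤ).card = 4 := by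
    rw [Finset.card_insert_of_notMem (by
      simp only [Finset.mem_insert, Finset.mem_singleton]; omega),
      Finset.card_insert_of_notMem (by
      simp only [Finset.mem_insert, Finset.mem_singleton]; omega),
      Finset.card_pair (by omega)]
  have hmuM : mu (SG a1 a2 a3 a4) (I + dual (SG a1 a2 a3 a4) I) = 4 := by
    rw [hM]
    refine mu_eq_four hcard4 hgenM ?_
    intro G hG
    rw [genBy] at hG
    have hkey : ∀ b : ℤ, b ∈ SG a1 a2 a3 a4 → b ≠ 0 →
        ∃ g, g ∈ G ∧ b - g ∈ SG a1 a2 a3 a4 ∧ g ∈ SG a1 a2 a3 a4 ∧ g ≠ 0 := by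
      intro b hb hb0
      have hbM : b ∈ SG a1 a2 a3 a4 \ {0} := ⟨hb, hb0⟩
      rw [hG] at hbM
      obtain ⟨g, hgG, hgb⟩ := hbM
      have hgM : g ∈ SG a1 a2 a3 a4 \ {0} := by
        rw [hG]
        exact ⟨g, hgG, by simpa using (sg_zero (a1:=a1) (a2:=a2) (a3:=a3) (a4:=a4))⟩
      exact ⟨g, hgG, hgb, hgM.1, by simpa using hgM.2⟩
    have m1 : (a1:ℤ) ∈ G := by
      obtain ⟨g, hgG, hd', hgS, hg0⟩ := hkey a1 sg_gen1 (by
        intro h; exact absurd (by exact_mod_cast h : a1 = 0) (by omega))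
      have h1g := sg_pos_ge h12.le h23.le h34.le hgS hg0
      have h2g := sg_nonneg hd'
      have hgeq : g = (a1:ℤ) := by linarith
      exact hgeq ▸ hgG
    have m2 : (a2:ℤ) ∈ G := by
      obtain ⟨g, hgG, hd', hgS, hg0⟩ := hkey a2 sg_gen2 (by
        intro h; exact absurd (by exact_mod_cast h : a2 = 0) (by omega))
      by_cases hs0 : (a2:ℤ) - g = 0
      · have hgeq : g = (a2:ℤ) := by linarith
        exact hgeq ▸ hgG
      · exfalso
        have hga := sg_pos_ge h12.le h23.le h34.le hgS hg0
        have hsa := sg_pos_ge h12.le h23.le h34.le hd' hs0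
        obtain ⟨t, htg⟩ := sg_small h23.le h34.le hgS (by omega)
        obtain ⟨t', hts⟩ := sg_small h23.le h34.le hd' (by omega)
        apply hd12
        have hcasteq : (a2:ℤ) = ((t + t' : ℕ):ℤ) * a1 := by push_cast; linarith
        have h' : a2 = (t+t')*a1 := by exact_mod_cast hcasteq
        exact ⟨t+t', by rw [h', Nat.mul_comm]⟩
    have m3 : (a3:ℤ) ∈ G := by
      obtain ⟨g, hgG, hd', hgS, hg0⟩ := hkey a3 sg_gen3 (by
        intro h; exact absurd (by exact_mod_cast h : a3 = 0) (by omega))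
      by_cases hs0 : (a3:ℤ) - g = 0
      · have hgeq : g = (a3:ℤ) := by linarith
        exact hgeq ▸ hgG
      · exfalso
        have hga := sg_pos_ge h12.le h23.le h34.le hgS hg0
        have hsa := sg_pos_ge h12.le h23.le h34.le hd' hs0
        obtain ⟨p1, q1, hg1⟩ := sg_mid h34.le hgS (by omega)
        obtain ⟨p2, q2, hg2⟩ := sg_mid h34.le hd' (by omega)
        exact notin_a3 E1 E2 E3 hcopde hcopu1e hu1ge2 hd23 (by omega) h3lt (p1+p2) (q1+q2)
          (by push_cast; linarith)
    have m4 : (a4:ℤ) ∈ G := by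
      obtain ⟨g, hgG, hd', hgS, hg0⟩ := hkey a4 sg_gen4 (by
        intro h; exact absurd (by exact_mod_cast h : a4 = 0) (by omega))
      by_cases hs0 : (a4:ℤ) - g = 0
      · have hgeq : g = (a4:ℤ) := by linarith
        exact hgeq ▸ hgG
      · exfalso
        have hga := sg_pos_ge h12.le h23.le h34.le hgS hg0
        have hsa := sg_pos_ge h12.le h23.le h34.le hd' hs0
        obtain ⟨p1, q1, r1, hg1⟩ := sg_mid4 hgS (by omega)
        obtain ⟨p2, q2, r2, hg2⟩ := sg_mid4 hd' (by omega)
        exact notin_a4 E1 E2 E3 E4 hcopde hv2ge hv3ge hd14 (by omega) h4lt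
          (p1+p2) (q1+q2) (r1+r2) (by push_cast; linarith)
    exact ⟨m1, m2, m3, m4⟩
  exact ⟨hmuI, hmuD, hmuM, hM⟩
end

section
/- For every integer z ≥ 3 with 5 not dividing 2z+1, the set {2(2z+1), 5z, 5(z+1), 3(2z+1)} is a unitary set; consequently there exist infinitely many unitary numerical semigroups. -/
/-- {a1,a2,a3,a4} is a unitary set. -/
def IsUnitary (a1 a2 a3 a4 : ℕ) : Prop :=
  0 < a1 ∧ a1 < a2 ∧ a2 < a3 ∧ a3 < a4 ∧
  Nat.gcd (Nat.gcd a1 a2) (Nat.gcd a3 a4) = 1 ∧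
  ¬ a1 ∣ a2 ∧ ¬ a1 ∣ a3 ∧ ¬ a1 ∣ a4 ∧ ¬ a2 ∣ a3 ∧ ¬ a2 ∣ a4 ∧ ¬ a3 ∣ a4 ∧
  ¬ a2 ∣ a1 ∧ ¬ a3 ∣ a1 ∧ ¬ a4 ∣ a1 ∧ ¬ a3 ∣ a2 ∧ ¬ a4 ∣ a2 ∧ ¬ a4 ∣ a3 ∧
  a1 + a4 = a2 + a3 ∧
  a1 + a4 = Nat.gcd a1 a4 * Nat.gcd a2 a3

lemma key (z : ℕ) (hz : 3 ≤ z) (h5 : ¬ (5 ∣ 2 * z + 1)) :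
    IsUnitary (2 * (2 * z + 1)) (5 * z) (5 * (z + 1)) (3 * (2 * z + 1)) := by
  have h5' : ¬ (5 ∣ 3 * (2 * z + 1)) := by
    intro h
    have : (5:ℕ) ∣ 2 * z + 1 := (Nat.Coprime.dvd_of_dvd_mul_left (by norm_num) h)
    exact h5 this
  refine ⟨by omega, by omega, by omega, by omega, ?_, ?_, ?_, ?_, ?_, ?_, ?_, ?_, ?_, ?_, ?_, ?_, ?_, by ring, ?_⟩
  · -- gcd(gcd a1 a2, gcd a3 a4) = 1
    have h12 : Nat.gcd (2 * (2 * z + 1)) (5 * z) ∣ 2 := by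
      have hd : Nat.gcd (2 * (2 * z + 1)) (5 * z) ∣ 10 := by
        have h1 : Nat.gcd (2 * (2 * z + 1)) (5 * z) ∣ 5 * (2 * (2 * z + 1)) :=
          (Nat.gcd_dvd_left _ _).mul_left 5
        have h2 : Nat.gcd (2 * (2 * z + 1)) (5 * z) ∣ 4 * (5 * z) :=
          (Nat.gcd_dvd_right _ _).mul_left 4
        have := Nat.dvd_sub h1 h2
        have he : 5 * (2 * (2 * z + 1)) - 4 * (5 * z) = 10 := by omega
        rwa [he] at this
      -- 5 does not divide the gcd since 5 ∤ 2(2z+1)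
      have hn5 : ¬ (5 ∣ Nat.gcd (2 * (2 * z + 1)) (5 * z)) := by
        intro h
        have : (5:ℕ) ∣ 2 * (2 * z + 1) := h.trans (Nat.gcd_dvd_left _ _)
        have : (5:ℕ) ∣ 2 * z + 1 := Nat.Coprime.dvd_of_dvd_mul_left (by norm_num) this
        exact h5 this
      have hc : Nat.Coprime (Nat.gcd (2 * (2 * z + 1)) (5 * z)) 5 :=
        ((Nat.Prime.coprime_iff_not_dvd (by norm_num)).mpr hn5).symm
      have hd' : Nat.gcd (2 * (2 * z + 1)) (5 * z) ∣ 2 * 5 := by rwa [show (2*5 : ℕ) = 10 by norm_num]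
      exact hc.dvd_of_dvd_mul_right hd' 
    have h34 : Nat.gcd (5 * (z + 1)) (3 * (2 * z + 1)) ∣ 3 := by
      have hd : Nat.gcd (5 * (z + 1)) (3 * (2 * z + 1)) ∣ 15 := by
        have h1 : Nat.gcd (5 * (z + 1)) (3 * (2 * z + 1)) ∣ 6 * (5 * (z + 1)) :=
          (Nat.gcd_dvd_left _ _).mul_left 6
        have h2 : Nat.gcd (5 * (z + 1)) (3 * (2 * z + 1)) ∣ 5 * (3 * (2 * z + 1)) :=
          (Nat.gcd_dvd_right _ _).mul_left 5
        have := Nat.dvd_sub h1 h2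
        have he : 6 * (5 * (z + 1)) - 5 * (3 * (2 * z + 1)) = 15 := by omega
        rwa [he] at this
      have hn5 : ¬ (5 ∣ Nat.gcd (5 * (z + 1)) (3 * (2 * z + 1))) := by
        intro h
        exact h5' (h.trans (Nat.gcd_dvd_right _ _))
      have hc : Nat.Coprime (Nat.gcd (5 * (z + 1)) (3 * (2 * z + 1))) 5 :=
        ((Nat.Prime.coprime_iff_not_dvd (by norm_num)).mpr hn5).symm
      have hd' : Nat.gcd (5 * (z + 1)) (3 * (2 * z + 1)) ∣ 3 * 5 := by rwa [show (3*5 : ℕ) = 15 by norm_num]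
      exact hc.dvd_of_dvd_mul_right hd' 
    have := Nat.dvd_gcd ((Nat.gcd_dvd_left _ _).trans h12) ((Nat.gcd_dvd_right _ _).trans h34)
    have h23 : Nat.gcd 2 3 = 1 := by norm_num
    have := this.trans (dvd_refl _)
    have hle : Nat.gcd (Nat.gcd (2 * (2 * z + 1)) (5 * z)) (Nat.gcd (5 * (z + 1)) (3 * (2 * z + 1))) ∣ Nat.gcd 2 3 :=
      Nat.dvd_gcd ((Nat.gcd_dvd_left _ _).trans h12) ((Nat.gcd_dvd_right _ _).trans h34)
    rw [h23] at hle
    exact Nat.eq_one_of_dvd_one hle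
  · -- ¬ a1 ∣ a2
    intro h
    have h1 : 2 * (2 * z + 1) ∣ 5 * (2 * (2 * z + 1)) := dvd_mul_left _ 5
    have h2 : 2 * (2 * z + 1) ∣ 4 * (5 * z) := h.mul_left 4
    have := Nat.dvd_sub h1 h2
    have he : 5 * (2 * (2 * z + 1)) - 4 * (5 * z) = 10 := by omega
    rw [he] at this
    have := Nat.le_of_dvd (by norm_num) this
    omega
  · -- ¬ a1 ∣ a3
    intro h
    have h1 : 2 * (2 * z + 1) ∣ 4 * (5 * (z + 1)) := h.mul_left 4
    have h2 : 2 * (2 * z + 1) ∣ 5 * (2 * (2 * z + 1)) := dvd_mul_left _ 5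
    have := Nat.dvd_sub h1 h2
    have he : 4 * (5 * (z + 1)) - 5 * (2 * (2 * z + 1)) = 10 := by omega
    rw [he] at this
    have := Nat.le_of_dvd (by norm_num) this
    omega
  · -- ¬ a1 ∣ a4 : a1 even, a4 odd
    intro h
    have h2 : (2:ℕ) ∣ 2 * (2 * z + 1) := Dvd.intro _ rfl
    have := h2.trans h
    omega
  · -- ¬ a2 ∣ a3
    intro h
    have := Nat.dvd_sub h (dvd_refl (5 * z))
    have he : 5 * (z + 1) - 5 * z = 5 := by omega
    rw [he] at this
    have := Nat.le_of_dvd (by norm_num) this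
    omega
  · -- ¬ a2 ∣ a4 : 5 ∣ a2 but 5 ∤ a4
    intro h
    have h2 : (5:ℕ) ∣ 5 * z := dvd_mul_right 5 z
    exact h5' (h2.trans h)
  · -- ¬ a3 ∣ a4
    intro h
    have h2 : (5:ℕ) ∣ 5 * (z + 1) := dvd_mul_right 5 _
    exact h5' (h2.trans h)
  · intro h; have := Nat.le_of_dvd (by omega) h; omega
  · intro h; have := Nat.le_of_dvd (by omega) h; omega
  · intro h; have := Nat.le_of_dvd (by omega) h; omega
  · intro h; have := Nat.le_of_dvd (by omega) h; omega
  · intro h; have := Nat.le_of_dvd (by omega) h; omega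
  · intro h; have := Nat.le_of_dvd (by omega) h; omega
  · -- a1 + a4 = gcd a1 a4 * gcd a2 a3
    have g14 : Nat.gcd (2 * (2 * z + 1)) (3 * (2 * z + 1)) = 2 * z + 1 := by
      rw [Nat.gcd_mul_right]
      norm_num
    have g23 : Nat.gcd (5 * z) (5 * (z + 1)) = 5 := by
      rw [Nat.gcd_mul_left]
      have : Nat.gcd z (z + 1) = 1 := by simp [Nat.gcd_comm, Nat.succ_sub_one, Nat.gcd_self_add_left]
      rw [this]
    rw [g14, g23]
    ring

theorem stmt_16 :
    (∀ z : ℕ, 3 ≤ z → ¬ (5 ∣ 2 * z + 1) →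
      IsUnitary (2 * (2 * z + 1)) (5 * z) (5 * (z + 1)) (3 * (2 * z + 1))) ∧
    {t : ℕ × ℕ × ℕ × ℕ | IsUnitary t.1 t.2.1 t.2.2.1 t.2.2.2}.Infinite := by
  constructor
  · exact key
  · apply Set.infinite_of_injective_forall_mem
      (f := fun n : ℕ => (2 * (2 * (5 * n + 3) + 1), 5 * (5 * n + 3),
        5 * ((5 * n + 3) + 1), 3 * (2 * (5 * n + 3) + 1)))
    · intro a b hab
      simp only [Prod.mk.injEq] at hab
      omega
    · intro n
      have h5 : ¬ (5 ∣ 2 * (5 * n + 3) + 1) := by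
        intro ⟨k, hk⟩; omega
      exact key (5 * n + 3) (by omega) h5
end
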